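/- arXiv:2106.04801 — 5 statements merged into one kernel-verified Lean document; each statement's English description precedes it below -/
import Mathlib

section
/- Let V be a weight module over sl2 with finite-dimensional weight spaces, whose support is contained in λ+2ℤ. If e acts locally nilpotently on V, then supp(V) is bounded from above (i.e., {q ∈ ℝ : λ+2q ∈ supp(V)} is bounded above). -/
/-!
If the support were unbounded above, local nilpotency of `e` would produce primitive vectors
(vectors killed by `e`) of weight `λ + 2n` for infinitely many `n : ℕ`. Applying `fⁿ` moves each
of them into the single weight space of weight `λ`. For large `n` the images are nonzero
eigenvectors of the Casimir operator `h² + 2h + 4fe` with pairwise distinct eigenvalues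
`(λ + 2n)² + 2(λ + 2n)`, hence linearly independent, contradicting the finite dimensionality of
that weight space.
-/

open LieModule Module

attribute [local instance] LieRing.ofAssociativeRing

theorem Module.End.ne_zero_of_eigenspace_ne_bot {R M : Type*} [CommRing R] [AddCommGroup M]
    [Module R M] [IsDomain R] [IsTorsionFree R M] {φ : Module.End R M} {μ : R} (hμ : μ ≠ 0)
    (hφ : φ.eigenspace μ ≠ ⊥) : φ ≠ 0 := by
  rintro rfl
  obtain ⟨v, hv, hv0⟩ := (Submodule.ne_bot_iff _).mp hφ
  have hμv := Module.End.mem_eigenspace_iff.mp hv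
  rw [LinearMap.zero_apply, eq_comm, smul_eq_zero_iff_left hv0] at hμv
  exact hμ hμv

theorem Complex.injOn_sq_add_two_mul :
    Set.InjOn (fun z : ℂ ↦ z ^ 2 + 2 * z) {z | -1 < z.re} := by
  intro z hz w hw hzw
  have hsum : z + w + 2 ≠ 0 := fun h0 ↦ by
    have := congrArg Complex.re h0
    simp only [Complex.add_re, Complex.re_ofNat, Complex.zero_re] at this
    linarith [hz.out, hw.out]
  have : (z - w) * (z + w + 2) = 0 := by linear_combination hzw
  exact sub_eq_zero.mp ((mul_eq_zero.mp this).resolve_right hsum)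

theorem IsSl2Triple.of_mul_sub_mul {A : Type*} [Ring A] {h e f : A} (hh : h ≠ 0)
    (he : h * e - e * h = 2 • e) (hf : h * f - f * h = -(2 • f)) (hef : e * f - f * e = h) :
    IsSl2Triple h e f where
  h_ne_zero := hh
  lie_e_f := by rw [Ring.lie_def, hef]
  lie_h_e_nsmul := by rw [Ring.lie_def, he]
  lie_h_f_nsmul := by rw [Ring.lie_def, hf]

section Casimir

variable (R : Type*) {L : Type*} (M : Type*) [CommRing R] [LieRing L] [LieAlgebra R L]
  [AddCommGroup M] [Module R M] [LieRingModule L M] [LieModule R L M]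

def sl2Casimir (h e f : L) : Module.End R M :=
  toEnd R L M h * toEnd R L M h + (2 : R) • toEnd R L M h +
    (4 : R) • (toEnd R L M f * toEnd R L M e)

lemma sl2Casimir_apply (h e f : L) (m : M) :
    sl2Casimir R M h e f m =
      ⁅h, ⁅h, m⁆⁆ + (2 : R) • ⁅h, m⁆ + (4 : R) • ⁅f, ⁅e, m⁆⁆ := by
  simp [sl2Casimir]

end Casimir

namespace IsSl2Triple

section CommRing

variable {R L M : Type*} [CommRing R] [LieRing L] [LieAlgebra R L]
  [AddCommGroup M] [Module R M] [LieRingModule L M] [LieModule R L M]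
  {h e f : L} (t : IsSl2Triple h e f) {m : M} {μ : R}

include t in
lemma exists_hasPrimitiveVectorWith_of_pow_toEnd_e_eq_zero (hm₀ : m ≠ 0)
    (hm : ⁅h, m⁆ = μ • m) {N : ℕ} (hN : (toEnd R L M e ^ N) m = 0) :
    ∃ n : ℕ, t.HasPrimitiveVectorWith ((toEnd R L M e ^ n) m) (μ + 2 * n) := by
  obtain ⟨n, hn, hn_succ⟩ := Nat.exists_not_and_succ_of_not_zero_of_exists
    (p := fun n ↦ (toEnd R L M e ^ n) m = 0) (by simpa using hm₀) ⟨N, hN⟩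
  exact ⟨n, hn, t.lie_h_pow_toEnd_e hm n, by rwa [lie_e_pow_toEnd_e]⟩

namespace HasPrimitiveVectorWith

variable {t} (P : t.HasPrimitiveVectorWith m μ)
include P

lemma pow_toEnd_f_ne_zero_of_ne_nat [IsDomain R] [CharZero R] [IsTorsionFree R M] {i : ℕ}
    (hμ : ∀ j : ℕ, j < i → μ ≠ j) : (toEnd R L M f ^ i) m ≠ 0 := by
  induction i with
  | zero => simpa using P.ne_zero
  | succ i ih =>
    intro hi
    have h_coeff : ((i + 1) * (μ - i) : R) ≠ 0 :=
      mul_ne_zero (Nat.cast_add_one_ne_zero i) (sub_ne_zero.mpr (hμ i i.lt_succ_self))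
    have := P.lie_e_pow_succ_toEnd_f i
    rw [hi, lie_zero, eq_comm, smul_eq_zero_iff_right h_coeff] at this
    exact ih (fun j hj ↦ hμ j (hj.trans i.lt_succ_self)) this

lemma sl2Casimir_pow_toEnd_f (n : ℕ) :
    sl2Casimir R M h e f ((toEnd R L M f ^ n) m) =
      (μ ^ 2 + 2 * μ) • (toEnd R L M f ^ n) m := by
  rw [sl2Casimir_apply]
  cases n with
  | zero =>
    simp only [pow_zero, Module.End.one_apply, P.lie_h, P.lie_e, lie_smul, lie_zero, smul_zero,
      add_zero, smul_smul, ← add_smul]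
    ring_nf
  | succ n =>
    rw [P.lie_e_pow_succ_toEnd_f, lie_smul, P.lie_f_pow_toEnd_f, P.lie_h_pow_toEnd_f, lie_smul,
      P.lie_h_pow_toEnd_f, smul_smul, smul_smul, smul_smul, ← add_smul, ← add_smul]
    congr 1
    push_cast
    ring

end HasPrimitiveVectorWith

end CommRing

section Complex

variable {L M : Type*} [LieRing L] [LieAlgebra ℂ L] [AddCommGroup M] [Module ℂ M]
  [LieRingModule L M] [LieModule ℂ L M] {h e f : L}

lemma finite_setOf_hasPrimitiveVectorWith (t : IsSl2Triple h e f) (μ₀ : ℂ)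
    [FiniteDimensional ℂ ((toEnd ℂ L M h).eigenspace μ₀)] :
    {n : ℕ | ∃ m : M, t.HasPrimitiveVectorWith m (μ₀ + 2 * n)}.Finite := by
  obtain ⟨N, hN⟩ := exists_nat_gt (-μ₀.re)
  set T := {n : ℕ | N ≤ n ∧ ∃ m : M, t.HasPrimitiveVectorWith m (μ₀ + 2 * n)}
  suffices T.Finite from (this.union (Set.finite_Iio N)).subset fun n hn ↦
    (le_or_gt N n).imp (fun hNn ↦ ⟨hNn, hn⟩) id
  -- This bound excludes both the vanishing of `fⁿ m` and coincidences among the Casimir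
  -- eigenvalues.
  have hre : ∀ n : T, ((n : ℕ) : ℝ) < (μ₀ + 2 * (n : ℕ)).re := fun n ↦ by
    have : (N : ℝ) ≤ (n : ℕ) := by exact_mod_cast n.2.1
    have : (μ₀ + 2 * (n : ℕ)).re = μ₀.re + 2 * (n : ℕ) := by simp
    linarith
  choose m hm using fun n : T ↦ n.2.2
  let w : T → (toEnd ℂ L M h).eigenspace μ₀ := fun n ↦
    ⟨(toEnd ℂ L M f ^ (n : ℕ)) (m n), by
      rw [Module.End.mem_eigenspace_iff, toEnd_apply_apply, (hm n).lie_h_pow_toEnd_f]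
      ring_nf⟩
  let c : T → ℂ := fun n ↦ (μ₀ + 2 * (n : ℕ)) ^ 2 + 2 * (μ₀ + 2 * (n : ℕ))
  have hw : ∀ n, (sl2Casimir ℂ M h e f).HasEigenvector (c n) (w n) := by
    refine fun n ↦ ⟨Module.End.mem_eigenspace_iff.mpr ((hm n).sl2Casimir_pow_toEnd_f n), ?_⟩
    refine (hm n).pow_toEnd_f_ne_zero_of_ne_nat fun j hj hμj ↦ ?_
    have : (j : ℝ) < (n : ℕ) := by exact_mod_cast hj
    linarith [hre n, congrArg Complex.re hμj, Complex.natCast_re j]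
  have hc : Function.Injective c := fun a b hab ↦ by
    have hpos : ∀ n : T, -1 < (μ₀ + 2 * (n : ℕ)).re := fun n ↦
      (neg_one_lt_zero.trans_le (Nat.cast_nonneg _)).trans (hre n)
    have := Complex.injOn_sq_add_two_mul (hpos a) (hpos b) hab
    exact Subtype.ext <| by
      exact_mod_cast mul_right_injective₀ two_ne_zero (add_left_cancel this)
  have hli : LinearIndependent ℂ w := LinearIndependent.of_comp (Submodule.subtype _)
    ((sl2Casimir ℂ M h e f).eigenvectors_linearIndependent' c hc _ hw)
  exact Set.finite_coe_iff.mp hli.finite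

end Complex

end IsSl2Triple

theorem stmt_1_general (V : Type) [AddCommGroup V] [Module ℂ V]
    (e f h : Module.End ℂ V)
    (he : h * e - e * h = 2 • e)
    (hf : h * f - f * h = -(2 • f))
    (hef : e * f - f * e = h)
    (hfd : ∀ μ : ℂ, FiniteDimensional ℂ (h.eigenspace μ))
    (lam : ℂ)
    (hsupp : ∀ μ : ℂ, h.eigenspace μ ≠ ⊥ → ∃ k : ℤ, μ = lam + 2 * k)
    (hnil : ∀ v : V, ∃ N : ℕ, (e ^ N) v = 0) :
    ∃ B : ℝ, ∀ q : ℝ, h.eigenspace (lam + 2 * (q : ℂ)) ≠ ⊥ → q ≤ B := by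
  by_contra! hunb
  obtain ⟨q₀, hq₀, hq₀_gt⟩ := hunb (-lam.re / 2)
  have hh : h ≠ 0 := Module.End.ne_zero_of_eigenspace_ne_bot (fun h0 ↦ by
    have : (lam + 2 * (q₀ : ℂ)).re = lam.re + 2 * q₀ := by simp
    rw [h0, Complex.zero_re] at this
    linarith) hq₀
  have t := IsSl2Triple.of_mul_sub_mul hh he hf hef
  have : FiniteDimensional ℂ ((toEnd ℂ _ V h).eigenspace lam) := hfd lam
  obtain ⟨b, hb⟩ := (t.finite_setOf_hasPrimitiveVectorWith (M := V) lam).bddAbove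
  obtain ⟨q, hq, hbq⟩ := hunb b
  obtain ⟨k, hk⟩ := hsupp _ hq
  obtain rfl : q = k := by simpa using congrArg Complex.re hk
  lift k to ℕ using by exact_mod_cast (b.cast_nonneg (α := ℝ)).trans hbq.le
  obtain ⟨v, hv, hv0⟩ := (Submodule.ne_bot_iff _).mp hq
  obtain ⟨N, hN⟩ := hnil v
  obtain ⟨n, hn⟩ := t.exists_hasPrimitiveVectorWith_of_pow_toEnd_e_eq_zero hv0
    (Module.End.mem_eigenspace_iff.mp hv) (N := N) (by simpa using hN)
  have hkn : k + n ≤ b := hb ⟨_, by convert hn using 1; push_cast; ring⟩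
  have hbk : b < k := by exact_mod_cast hbq
  omega

/-- For a weight sl₂-module with finite-dimensional weight spaces whose
support lies in `λ + 2ℤ`, if `e` acts locally nilpotently then the support is bounded
from above. -/
theorem stmt_1 (V : Type) [AddCommGroup V] [Module ℂ V]
    (e f h : Module.End ℂ V)
    (he : h * e - e * h = 2 • e)
    (hf : h * f - f * h = -(2 • f))
    (hef : e * f - f * e = h)
    (hweight : ⨆ μ : ℂ, h.eigenspace μ = ⊤)
    (hfd : ∀ μ : ℂ, FiniteDimensional ℂ (h.eigenspace μ))
    (lam : ℂ)
    (hsupp : ∀ μ : ℂ, h.eigenspace μ ≠ ⊥ → ∃ k : ℤ, μ = lam + 2 * k)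
    (hnil : ∀ v : V, ∃ N : ℕ, (e ^ N) v = 0) :
    ∃ B : ℝ, ∀ q : ℝ, h.eigenspace (lam + 2 * (q : ℂ)) ≠ ⊥ → q ≤ B :=
  stmt_1_general V e f h he hf hef hfd lam hsupp hnil
end

section
/- Let B, B' be unital associative superalgebras with B' having a countable basis, R = B ⊗ B'. If V is a simple R-module containing a strictly simple B'-submodule M' (where B' acts as ℂ⊗B'), then V ≅ M ⊗ M' for some simple B-module M. -/
/-!
The module `M` is the space of super-intertwiners `M' → V`: linear maps whose even part (for the
grading `f ↦ σV ∘ f ∘ σM'`) commutes with `B'` and whose odd part commutes with `B'` up to the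
sign `(-1)^|b'|`. `B` acts on it by post-composition, and evaluation `f ⊗ m ↦ f m` is a morphism
`M ⊗ M' → V` of `R`-modules, onto because its image is a nonzero submodule of the simple module `V`.

Injectivity is Jacobson density. By Dixmier's lemma (`B'` has countable dimension over the
uncountable field `ℂ`) every endomorphism of the strictly simple module `M'` commuting with `B'` is
a scalar, so a minimal relation `∑ fᵢ mᵢ = 0` between linearly independent intertwiners forces
`mᵢ = cᵢ m₁`, and then `∑ cᵢ fᵢ` is an intertwiner killing `m₁`, hence zero. Precomposing odd
parts with `σM'` turns super-intertwiners into ordinary ones. The same image argument, applied to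
a graded `B`-submodule of `M`, shows that `M` is simple.
-/

open TensorProduct Cardinal Function

universe u

section Representations

variable {K A W V : Type*} [Field K] [Ring A] [Algebra K A] [AddCommGroup W] [Module K W]
  [AddCommGroup V] [Module K V]

def IsStrictlySimple (ρ : A →ₐ[K] Module.End K W) : Prop :=
  Nontrivial W ∧ ∀ N : Submodule K W, (∀ a, N.map (ρ a) ≤ N) → N = ⊥ ∨ N = ⊤

def HasScalarCommutant (ρ : A →ₐ[K] Module.End K W) : Prop :=
  ∀ e : Module.End K W, (∀ a, Commute e (ρ a)) → ∃ c : K, e = c • 1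

def intertwiners (ρ : A →ₐ[K] Module.End K W) (τ : A →ₐ[K] Module.End K V) :
    Submodule K (W →ₗ[K] V) where
  carrier := {f | ∀ a x, f (ρ a x) = τ a (f x)}
  add_mem' hf hg a x := by simp [hf a x, hg a x]
  zero_mem' a x := by simp
  smul_mem' c f hf a x := by simp [hf a x]

theorem intertwiners.comp_mem {U : Type*} [AddCommGroup U] [Module K U]
    {ρ : A →ₐ[K] Module.End K W} {τ : A →ₐ[K] Module.End K V} {υ : A →ₐ[K] Module.End K U}
    {h : V →ₗ[K] U} {g : W →ₗ[K] V} (hh : h ∈ intertwiners τ υ) (hg : g ∈ intertwiners ρ τ) :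
    h ∘ₗ g ∈ intertwiners ρ υ := fun a x => by
  rw [LinearMap.comp_apply, hg a x, hh a, LinearMap.comp_apply]

def AlgHom.restrictEnd (ρ : A →ₐ[K] Module.End K W) (N : Submodule K W)
    (hN : ∀ a, ∀ x ∈ N, ρ a x ∈ N) : A →ₐ[K] Module.End K N :=
  AlgHom.ofLinearMap
    { toFun := fun a => (ρ a).restrict (hN a)
      map_add' := fun a b => by ext; simp
      map_smul' := fun c a => by ext; simp }
    (by ext; simp) (fun a b => by ext; simp)

end Representations

namespace Module.End

variable {K X : Type*} [Field K] [AddCommGroup X] [Module K X]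

def evenPart (S : Module.End K X) : Module.End K X := (2⁻¹ : K) • (1 + S)

def oddPart (S : Module.End K X) : Module.End K X := (2⁻¹ : K) • (1 - S)

variable {S T : Module.End K X}

theorem evenPart_apply (x : X) : S.evenPart x = (2⁻¹ : K) • (x + S x) := rfl

theorem oddPart_apply (x : X) : S.oddPart x = (2⁻¹ : K) • (x - S x) := rfl

theorem coe_evenPart_restrict {p : Submodule K X} (h : ∀ x ∈ p, S x ∈ p) (x : p) :
    (evenPart (S.restrict h) x : X) = S.evenPart x := rfl

theorem coe_oddPart_restrict {p : Submodule K X} (h : ∀ x ∈ p, S x ∈ p) (x : p) :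
    (oddPart (S.restrict h) x : X) = S.oddPart x := rfl

theorem evenPart_add_oddPart [CharZero K] (x : X) : S.evenPart x + S.oddPart x = x := by
  rw [evenPart_apply, oddPart_apply, ← smul_add, add_add_sub_cancel, ← two_smul K, smul_smul,
    inv_mul_cancel₀ two_ne_zero, one_smul]

theorem evenPart_sub_oddPart [CharZero K] (x : X) : S.evenPart x - S.oddPart x = S x := by
  rw [evenPart_apply, oddPart_apply, ← smul_sub, add_sub_sub_cancel, ← two_smul K, smul_smul,
    inv_mul_cancel₀ two_ne_zero, one_smul]

theorem evenPart_apply_of_commute (h : Commute S T) (x : X) :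
    S.evenPart (T x) = T (S.evenPart x) := by
  rw [evenPart_apply, evenPart_apply, ← mul_apply S, h.eq, map_smul, map_add, mul_apply]

theorem oddPart_apply_of_commute (h : Commute S T) (x : X) :
    S.oddPart (T x) = T (S.oddPart x) := by
  rw [oddPart_apply, oddPart_apply, ← mul_apply S, h.eq, map_smul, map_sub, mul_apply]

theorem evenPart_apply_of_anticommute (h : S * T = -(T * S)) (x : X) :
    S.evenPart (T x) = T (S.oddPart x) := by
  rw [evenPart_apply, oddPart_apply, ← mul_apply S, h, map_smul, map_sub, LinearMap.neg_apply,
    mul_apply, sub_eq_add_neg]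

theorem oddPart_apply_of_anticommute (h : S * T = -(T * S)) (x : X) :
    S.oddPart (T x) = T (S.evenPart x) := by
  rw [evenPart_apply, oddPart_apply, ← mul_apply S, h, map_smul, map_add, LinearMap.neg_apply,
    mul_apply, sub_neg_eq_add]

theorem evenPart_eq_self [CharZero K] {x : X} (hx : S x = x) : S.evenPart x = x := by
  rw [evenPart_apply, hx, ← two_smul K, smul_smul, inv_mul_cancel₀ two_ne_zero, one_smul]

theorem oddPart_eq_self [CharZero K] {x : X} (hx : S x = -x) : S.oddPart x = x := by
  rw [oddPart_apply, hx, sub_neg_eq_add, ← two_smul K, smul_smul, inv_mul_cancel₀ two_ne_zero,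
    one_smul]

theorem evenPart_eq_zero {x : X} (hx : S x = -x) : S.evenPart x = 0 := by
  rw [evenPart_apply, hx, add_neg_cancel, smul_zero]

theorem oddPart_eq_zero {x : X} (hx : S x = x) : S.oddPart x = 0 := by
  rw [oddPart_apply, hx, sub_self, smul_zero]

section Involutive

variable (hS : Involutive S)
include hS

theorem apply_evenPart (x : X) : S (S.evenPart x) = S.evenPart x := by
  rw [evenPart_apply, map_smul, map_add, hS, add_comm]

theorem apply_oddPart (x : X) : S (S.oddPart x) = -S.oddPart x := by
  rw [oddPart_apply, map_smul, map_sub, hS, ← smul_neg, neg_sub]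

theorem exists_add_eq [CharZero K] (x : X) : ∃ p q, S p = p ∧ S q = -q ∧ p + q = x :=
  ⟨_, _, apply_evenPart hS x, apply_oddPart hS x, evenPart_add_oddPart x⟩

theorem evenPart_evenPart [CharZero K] (x : X) : S.evenPart (S.evenPart x) = S.evenPart x :=
  evenPart_eq_self (apply_evenPart hS x)

theorem oddPart_evenPart (x : X) : S.oddPart (S.evenPart x) = 0 :=
  oddPart_eq_zero (apply_evenPart hS x)

theorem evenPart_oddPart (x : X) : S.evenPart (S.oddPart x) = 0 :=
  evenPart_eq_zero (apply_oddPart hS x)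

theorem oddPart_oddPart [CharZero K] (x : X) : S.oddPart (S.oddPart x) = S.oddPart x :=
  oddPart_eq_self (apply_oddPart hS x)

theorem involutive_evenPart_add_mul_oddPart [CharZero K] (hT : Involutive T)
    (hST : Commute S T) : Involutive (S.evenPart + T * S.oddPart) := fun x => by
  simp only [LinearMap.add_apply, mul_apply, map_add, evenPart_apply_of_commute hST,
    oddPart_apply_of_commute hST, evenPart_evenPart hS, oddPart_evenPart hS, evenPart_oddPart hS,
    oddPart_oddPart hS, map_zero, add_zero, zero_add, hT _, evenPart_add_oddPart]

theorem involutive_map_evenPart_add_map_oddPart [CharZero K] {Y : Type*} [AddCommGroup Y]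
    [Module K Y] {T : Module.End K Y} (hT : Involutive T) :
    Involutive (map S.evenPart (1 : Module.End K Y) + map S.oddPart T) := by
  have h : (map S.evenPart (1 : Module.End K Y) + map S.oddPart T) *
      (map S.evenPart 1 + map S.oddPart T) = 1 := TensorProduct.ext' fun x y => by
    simp [evenPart_evenPart hS, oddPart_evenPart hS, evenPart_oddPart hS, oddPart_oddPart hS,
      hT y, ← add_tmul, evenPart_add_oddPart]
  exact fun t => LinearMap.congr_fun h t

end Involutive

end Module.End

namespace IsStrictlySimple

variable {K A W V : Type*} [Field K] [Ring A] [Algebra K A] [AddCommGroup W] [Module K W]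
  [AddCommGroup V] [Module K V] {ρ : A →ₐ[K] Module.End K W} {τ : A →ₐ[K] Module.End K V}

theorem orbit_surjective (hW : IsStrictlySimple ρ) {x : W} (hx : x ≠ 0) :
    Surjective (ρ.toLinearMap.flip x) := by
  refine LinearMap.range_eq_top.mp <| (hW.2 _ fun a => ?_).resolve_left fun h => hx ?_
  · rintro _ ⟨_, ⟨b, rfl⟩, rfl⟩
    exact ⟨a * b, by simp⟩
  · simpa using LinearMap.congr_fun (LinearMap.range_eq_bot.mp h) 1

theorem bijective_of_commute (hW : IsStrictlySimple ρ) {u : Module.End K W}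
    (hu : ∀ a, Commute u (ρ a)) (hu0 : u ≠ 0) : Bijective u := by
  refine ⟨LinearMap.ker_eq_bot.mp ((hW.2 _ fun a => ?_).resolve_right
    (mt LinearMap.ker_eq_top.mp hu0)), LinearMap.range_eq_top.mp ?_⟩
  · rintro _ ⟨x, hx, rfl⟩
    rw [SetLike.mem_coe, LinearMap.mem_ker] at hx
    rw [LinearMap.mem_ker, ← Module.End.mul_apply, (hu a).eq, Module.End.mul_apply, hx, map_zero]
  refine (hW.2 _ fun a => ?_).resolve_left (mt LinearMap.range_eq_bot.mp hu0)
  rintro _ ⟨_, ⟨x, rfl⟩, rfl⟩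
  exact ⟨ρ a x, LinearMap.congr_fun (hu a) x⟩

theorem eq_zero_of_mem_intertwiners (hW : IsStrictlySimple ρ) {g : W →ₗ[K] V}
    (hg : g ∈ intertwiners ρ τ) {x : W} (hx : x ≠ 0) (hgx : g x = 0) : g = 0 := by
  refine LinearMap.ker_eq_top.mp <| (hW.2 _ fun a => ?_).resolve_left fun h => hx ?_
  · rintro _ ⟨y, hy, rfl⟩
    simp_all [LinearMap.mem_ker, hg a y]
  · simpa [h] using LinearMap.mem_ker.mpr hgx

end IsStrictlySimple

section Dixmier

open Polynomial

theorem spectrum.isUnit_aeval_of_eq_empty {K A : Type*} [Field K] [IsAlgClosed K] [Ring A]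
    [Algebra K A] {e : A} (he : spectrum K e = ∅) {p : K[X]} (hp : p ≠ 0) :
    IsUnit (aeval e p) := by
  rcases lt_or_ge 0 p.degree with hdeg | hdeg
  · rw [← spectrum.zero_notMem_iff K, spectrum.map_polynomial_aeval_of_degree_pos e p hdeg, he]
    simp
  · rw [eq_C_of_degree_le_zero hdeg, C_ne_zero] at hp
    rw [eq_C_of_degree_le_zero hdeg, aeval_C]
    exact (isUnit_iff_ne_zero.mpr hp).map _

theorem Module.End.cardinal_le_rank_of_isUnit_aeval {K W : Type u} [Field K] [AddCommGroup W]
    [Module K W] [Nontrivial W] (e : Module.End K W)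
    (he : ∀ p : K[X], p ≠ 0 → IsUnit (aeval e p)) : #K ≤ Module.rank K W := by
  obtain ⟨w, hw⟩ := exists_ne (0 : W)
  let Φ : FractionRing K[X] →+* Module.End K W :=
    OreLocalization.universalHom (aeval e).toRingHom
      (IsUnit.liftRight ((aeval e).toRingHom.toMonoidHom.comp (nonZeroDivisors K[X]).subtype)
        fun p => he p (nonZeroDivisors.ne_zero p.2)) (fun _ => rfl)
  have hΦ : ∀ p, Φ (algebraMap K[X] _ p) = aeval e p := fun p =>
    OreLocalization.universalHom_commutes _ _ _
  let L : FractionRing K[X] →ₗ[K] W :=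
    { toFun := fun d => Φ d w
      map_add' := fun d d' => by simp
      map_smul' := fun c d => by
        rw [Algebra.smul_def, IsScalarTower.algebraMap_apply K K[X], map_mul, hΦ]
        simp [Algebra.algebraMap_eq_smul_one] }
  have hL : Function.Injective L := by
    rw [← LinearMap.ker_eq_bot, LinearMap.ker_eq_bot']
    intro d hd
    by_contra hd0
    exact hw (((Module.End.isUnit_iff _).mp ((isUnit_iff_ne_zero.mpr hd0).map Φ)).1
      (by simpa [L] using hd))
  have hX : Transcendental K (algebraMap K[X] (FractionRing K[X]) X) :=
    (transcendental_algebraMap_iff (IsFractionRing.injective _ _)).mpr (transcendental_X K)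
  calc #K ≤ Module.rank K (FractionRing K[X]) := hX.linearIndependent_sub_inv.cardinal_le_rank
    _ ≤ Module.rank K W := L.rank_le_of_injective hL

namespace IsStrictlySimple

variable {K A W : Type u} [Field K] [Ring A] [Algebra K A] [AddCommGroup W] [Module K W]
  {ρ : A →ₐ[K] Module.End K W}

theorem rank_le_rank (hW : IsStrictlySimple ρ) : Module.rank K W ≤ Module.rank K A := by
  obtain ⟨x, hx⟩ := @exists_ne _ hW.1 (0 : W)
  exact LinearMap.rank_le_of_surjective _ (hW.orbit_surjective hx)

theorem hasScalarCommutant [IsAlgClosed K] (hK : ℵ₀ < #K) (hA : Module.rank K A ≤ ℵ₀)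
    (hW : IsStrictlySimple ρ) : HasScalarCommutant ρ := by
  intro e he
  by_contra! hne
  have hspec : spectrum K e = ∅ := Set.eq_empty_of_forall_notMem fun c hc => hc <|
    (Module.End.isUnit_iff _).mpr <| hW.bijective_of_commute
      (fun a => (Algebra.commute_algebraMap_left c (ρ a)).sub_left (he a))
      (sub_ne_zero.mpr fun h => hne c (by rw [← h, Algebra.algebraMap_eq_smul_one]))
  have := hW.1
  exact (hK.trans_le ((e.cardinal_le_rank_of_isUnit_aeval fun p hp =>
    spectrum.isUnit_aeval_of_eq_empty hspec hp).trans (hW.rank_le_rank.trans hA))).false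

end IsStrictlySimple

end Dixmier

namespace IsStrictlySimple

variable {K A W V : Type*} [Field K] [Ring A] [Algebra K A] [AddCommGroup W] [Module K W]
  [AddCommGroup V] [Module K V] {ρ : A →ₐ[K] Module.End K W} {τ : A →ₐ[K] Module.End K V}

theorem exists_eq_smul_of_annihilator_le (hW : IsStrictlySimple ρ) (hρ : HasScalarCommutant ρ)
    {x y : W} (hx : x ≠ 0) (hxy : ∀ a, ρ a x = 0 → ρ a y = 0) : ∃ c : K, y = c • x := by
  obtain ⟨R, hR⟩ := (ρ.toLinearMap.flip x).exists_rightInverse_of_surjective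
    (LinearMap.range_eq_top.mpr (hW.orbit_surjective hx))
  have hRx : ∀ a, ρ (R (ρ a x)) x = ρ a x := fun a => by
    simpa using LinearMap.congr_fun hR (ρ a x)
  let ψ : Module.End K W := ρ.toLinearMap.flip y ∘ₗ R
  have hψ : ∀ a, ψ (ρ a x) = ρ a y := fun a => by
    simpa [ψ, sub_eq_zero] using hxy (R (ρ a x) - a) (by simp [hRx])
  obtain ⟨c, hc⟩ := hρ ψ fun b => LinearMap.ext fun z => by
    obtain ⟨a, rfl⟩ := hW.orbit_surjective hx z
    simp only [LinearMap.flip_apply, AlgHom.toLinearMap_apply, Module.End.mul_apply]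
    rw [← Module.End.mul_apply (ρ b), ← map_mul, hψ, hψ, map_mul, Module.End.mul_apply]
  exact ⟨c, by simpa [hc] using (hψ 1).symm⟩

theorem finsupp_eq_zero_of_sum_eq_zero (hW : IsStrictlySimple ρ) (hρ : HasScalarCommutant ρ)
    {ι : Type*} {f : ι → W →ₗ[K] V} (hf : ∀ i, f i ∈ intertwiners ρ τ)
    (hli : LinearIndependent K f) (m : ι →₀ W) (hm : (m.sum fun i x => f i x) = 0) :
    m = 0 := by
  classical
  induction hcard : m.support.card using Nat.strong_induction_on generalizing m with
  | _ n ih =>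
  by_contra hm0
  obtain ⟨j, hj⟩ := Finsupp.support_nonempty_iff.mpr hm0
  have hmj : m j ≠ 0 := Finsupp.mem_support_iff.mp hj
  have hann : ∀ a, ρ a (m j) = 0 → ∀ i, ρ a (m i) = 0 := by
    intro a ha i
    let m' : ι →₀ W := m.mapRange (ρ a) (map_zero _)
    have hsupp : m'.support ⊂ m.support := by
      refine Finsupp.support_mapRange.ssubset_of_not_superset fun h => ?_
      simpa [m', ha] using h hj
    have hm' : (m'.sum fun i x => f i x) = 0 := by
      rw [Finsupp.sum_mapRange_index (fun i => map_zero _)]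
      simp_rw [hf _ a]
      rw [← map_finsuppSum, hm, map_zero]
    simpa [m'] using DFunLike.congr_fun (ih _ (hcard ▸ Finset.card_lt_card hsupp) m' hm' rfl) i
  choose c hc using fun i => hW.exists_eq_smul_of_annihilator_le hρ hmj (fun a ha => hann a ha i)
  have hcj : c j = 1 := smul_left_injective K hmj (by simpa using (hc j).symm)
  let g : W →ₗ[K] V := ∑ i ∈ m.support, c i • f i
  have hg : g ∈ intertwiners ρ τ :=
    Submodule.sum_mem _ fun i _ => Submodule.smul_mem _ _ (hf i)
  have hgj : g (m j) = 0 := by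
    simpa only [g, LinearMap.coe_sum, Finset.sum_apply, LinearMap.smul_apply, ← map_smul,
      ← hc, Finsupp.sum] using hm
  have := linearIndependent_iff'.mp hli m.support c
    (hW.eq_zero_of_mem_intertwiners hg hmj hgj) j hj
  simp [hcj] at this

theorem injective_lift_intertwiners (hW : IsStrictlySimple ρ) (hρ : HasScalarCommutant ρ) :
    Injective (lift (intertwiners ρ τ).subtype) := by
  classical
  let b := Module.Basis.ofVectorSpace K (intertwiners ρ τ)
  refine (injective_iff_map_eq_zero _).mpr fun t ht => ?_
  obtain ⟨m, rfl⟩ := (equivFinsuppOfBasisLeft b).symm.surjective t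
  rw [equivFinsuppOfBasisLeft_symm_apply, map_finsuppSum] at ht
  simp only [lift.tmul] at ht
  rw [hW.finsupp_eq_zero_of_sum_eq_zero hρ (fun i => (b i).2)
    (b.linearIndependent.map' (intertwiners ρ τ).subtype (Submodule.ker_subtype _)) m ht,
    map_zero]

end IsStrictlySimple

theorem Submodule.mem_of_tmul_mem_range_rTensor {K X Y : Type*} [Field K] [AddCommGroup X]
    [Module K X] [AddCommGroup Y] [Module K Y] (N : Submodule K X) {x : X} {y : Y} (hy : y ≠ 0)
    (h : x ⊗ₜ[K] y ∈ LinearMap.range (N.subtype.rTensor Y)) : x ∈ N := by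
  by_contra hx
  obtain ⟨f, hfx, hfN⟩ := exists_dual_map_eq_bot_of_notMem hx inferInstance
  obtain ⟨g, hgy, -⟩ := exists_dual_map_eq_bot_of_notMem (p := (⊥ : Submodule K Y))
    (by simpa using hy) inferInstance
  have hΦ : lift ((LinearMap.mul K K).compl₁₂ f g) ∘ₗ N.subtype.rTensor Y = 0 :=
    TensorProduct.ext' fun n y' => by
      simpa [hfN] using Or.inl (mem_map_of_mem (f := f) n.2)
  obtain ⟨t, ht⟩ := h
  have := LinearMap.congr_fun hΦ t
  simp [ht, hfx, hgy] at this

section Super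

open Module.End

variable {K B B' V M' : Type*} [Field K] [Ring B] [Algebra K B] [Ring B'] [Algebra K B']
  [AddCommGroup V] [Module K V] [AddCommGroup M'] [Module K M']

def gradingConj (σM' : Module.End K M') (σV : Module.End K V) : Module.End K (M' →ₗ[K] V) :=
  LinearMap.compRight K σV ∘ₗ LinearMap.lcomp K V σM'

@[simp]
theorem gradingConj_apply (σM' : Module.End K M') (σV : Module.End K V) (f : M' →ₗ[K] V)
    (x : M') : gradingConj σM' σV f x = σV (f (σM' x)) := rfl

def superIntertwiners (σB' : B' ≃ₐ[K] B') (ρM' : B' →ₐ[K] Module.End K M')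
    (ρ' : B' →ₐ[K] Module.End K V) (σM' : Module.End K M') (σV : Module.End K V) :
    Submodule K (M' →ₗ[K] V) :=
  (intertwiners ρM' ρ').comap (gradingConj σM' σV).evenPart ⊓
    (intertwiners ρM' (ρ'.comp σB'.toAlgHom)).comap (gradingConj σM' σV).oddPart

variable {σB : B ≃ₐ[K] B} {σB' : B' ≃ₐ[K] B'} {ρ : B →ₐ[K] Module.End K V}
  {ρM' : B' →ₐ[K] Module.End K M'} {ρ' : B' →ₐ[K] Module.End K V} {σM' : Module.End K M'}
  {σV : Module.End K V}

theorem gradingConj_involutive (hσM' : Involutive σM') (hσV : Involutive σV) :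
    Involutive (gradingConj σM' σV) := fun f => LinearMap.ext fun x => by
  simp [hσM' x, hσV _]

theorem mul_eq_mul_of_odd [CharZero K] (hσB' : Involutive σB')
    (hsc1 : ∀ (b : B) (b' : B'), (σB b = b ∨ σB' b' = b') → ρ b * ρ' b' = ρ' b' * ρ b)
    (hsc2 : ∀ (b : B) (b' : B'), σB b = -b → σB' b' = -b' → ρ b * ρ' b' = -(ρ' b' * ρ b))
    {b : B} (hb : σB b = -b) (c : B') : ρ b * ρ' c = ρ' (σB' c) * ρ b := by
  obtain ⟨p, q, hp, hq, rfl⟩ := exists_add_eq (S := σB'.toLinearMap) hσB' c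
  have hp : σB' p = p := hp
  have hq : σB' q = -q := hq
  rw [map_add, map_add, hp, hq, map_add, map_neg, mul_add, add_mul, neg_mul, hsc1 b p (.inr hp),
    hsc2 b q hb hq]

namespace superIntertwiners

theorem mem_iff {f : M' →ₗ[K] V} : f ∈ superIntertwiners σB' ρM' ρ' σM' σV ↔
    (gradingConj σM' σV).evenPart f ∈ intertwiners ρM' ρ' ∧
      (gradingConj σM' σV).oddPart f ∈ intertwiners ρM' (ρ'.comp σB'.toAlgHom) := Iff.rfl

theorem mem_of_mem_intertwiners [CharZero K] (hσM' : Involutive σM') {e : M' →ₗ[K] V}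
    (he : e ∈ intertwiners ρM' ρ') (hgr : e ∘ₗ σM' = σV ∘ₗ e) :
    e ∈ superIntertwiners σB' ρM' ρ' σM' σV := by
  have hSe : gradingConj σM' σV e = e := LinearMap.ext fun x => by
    rw [gradingConj_apply, ← LinearMap.comp_apply σV, ← hgr, LinearMap.comp_apply, hσM' x]
  rw [mem_iff, evenPart_eq_self hSe, oddPart_eq_zero hSe]
  exact ⟨he, zero_mem _⟩

theorem comp_mem_intertwiners_of_odd (hσB' : Involutive σB')
    (hcompM' : ∀ b', σM' * ρM' b' = ρM' (σB' b') * σM') {g : M' →ₗ[K] V}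
    (hg : g ∈ intertwiners ρM' (ρ'.comp σB'.toAlgHom)) : g ∘ₗ σM' ∈ intertwiners ρM' ρ' :=
  fun c x => by
    rw [LinearMap.comp_apply, ← mul_apply, hcompM', mul_apply, hg (σB' c) (σM' x)]
    simp [hσB' c]

section Member

variable {f : M' →ₗ[K] V} (hf : f ∈ superIntertwiners σB' ρM' ρ' σM' σV)
include hf

theorem gradingConj_mem (hσM' : Involutive σM') (hσV : Involutive σV) :
    gradingConj σM' σV f ∈ superIntertwiners σB' ρM' ρ' σM' σV := by
  have hS := gradingConj_involutive hσM' hσV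
  rw [mem_iff, evenPart_apply_of_commute (.refl _), oddPart_apply_of_commute (.refl _),
    apply_evenPart hS, apply_oddPart hS]
  exact ⟨hf.1, neg_mem hf.2⟩

theorem apply_of_even [CharZero K] {c : B'} (hc : σB' c = c) (x : M') :
    f (ρM' c x) = ρ' c (f x) := by
  have hodd : _ = ρ' (σB' c) _ := hf.2 c x
  rw [← evenPart_add_oddPart (S := gradingConj σM' σV) f, LinearMap.add_apply,
    LinearMap.add_apply, hf.1 c x, hodd, hc, map_add]

theorem gradingConj_apply_of_odd [CharZero K] {c : B'} (hc : σB' c = -c) (x : M') :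
    gradingConj σM' σV f (ρM' c x) = ρ' c (f x) := by
  have hodd : _ = ρ' (σB' c) _ := hf.2 c x
  rw [← evenPart_sub_oddPart (S := gradingConj σM' σV) f, LinearMap.sub_apply, hf.1 c x, hodd,
    hc, map_neg, LinearMap.neg_apply, sub_neg_eq_add, ← map_add, ← LinearMap.add_apply,
    evenPart_add_oddPart]

theorem comp_mem [CharZero K] (hσB : Involutive σB) (hσB' : Involutive σB')
    (hcomp : ∀ b, σV * ρ b = ρ (σB b) * σV)
    (hsc1 : ∀ (b : B) (b' : B'), (σB b = b ∨ σB' b' = b') → ρ b * ρ' b' = ρ' b' * ρ b)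
    (hsc2 : ∀ (b : B) (b' : B'), σB b = -b → σB' b' = -b' → ρ b * ρ' b' = -(ρ' b' * ρ b))
    (b : B) : ρ b ∘ₗ f ∈ superIntertwiners σB' ρM' ρ' σM' σV := by
  obtain ⟨p, q, hp, hq, rfl⟩ := exists_add_eq (S := σB.toLinearMap) hσB b
  have hp : σB p = p := hp
  have hq : σB q = -q := hq
  rw [map_add, LinearMap.add_comp]
  refine add_mem ?_ ?_
  · have hcomm : Commute (gradingConj σM' σV) (LinearMap.compRight K (ρ p)) :=
      LinearMap.ext fun g => LinearMap.ext fun x => by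
        simpa [hp] using LinearMap.congr_fun (hcomp p) (g (σM' x))
    have hpρ : ∀ c, ρ p * ρ' c = ρ' c * ρ p := fun c => hsc1 p c (.inl hp)
    change LinearMap.compRight K (ρ p) f ∈ _
    rw [mem_iff, evenPart_apply_of_commute hcomm, oddPart_apply_of_commute hcomm]
    exact ⟨intertwiners.comp_mem (fun c y => LinearMap.congr_fun (hpρ c) y) hf.1,
      intertwiners.comp_mem (fun c y => LinearMap.congr_fun (hpρ (σB' c)) y) hf.2⟩
  · have hanti : gradingConj σM' σV * LinearMap.compRight K (ρ q) =
        -(LinearMap.compRight K (ρ q) * gradingConj σM' σV) :=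
      LinearMap.ext fun g => LinearMap.ext fun x => by
        simpa [hq] using LinearMap.congr_fun (hcomp q) (g (σM' x))
    have hqρ := mul_eq_mul_of_odd hσB' hsc1 hsc2 hq
    change LinearMap.compRight K (ρ q) f ∈ _
    rw [mem_iff, evenPart_apply_of_anticommute hanti, oddPart_apply_of_anticommute hanti]
    refine ⟨intertwiners.comp_mem (fun c y => ?_) hf.2,
      intertwiners.comp_mem (fun c y => LinearMap.congr_fun (hqρ c) y) hf.1⟩
    simpa [hσB' c] using LinearMap.congr_fun (hqρ (σB' c)) y

end Member

theorem injective_lift [CharZero K] (hσM' : Involutive σM') (hσV : Involutive σV)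
    (hσB' : Involutive σB') (hcompM' : ∀ b', σM' * ρM' b' = ρM' (σB' b') * σM')
    (hM' : IsStrictlySimple ρM') (hρM' : HasScalarCommutant ρM') :
    Injective (lift (superIntertwiners σB' ρM' ρ' σM' σV).subtype) := by
  set S := superIntertwiners σB' ρM' ρ' σM' σV
  set Sig := gradingConj σM' σV
  have hSig : Involutive Sig := gradingConj_involutive hσM' hσV
  let C : Module.End K (M' →ₗ[K] V) := LinearMap.lcomp K V σM'
  -- Evaluation factors through the involution `f ⊗ m ↦ f₀ ⊗ m + f₁ ⊗ σM' m` and the map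
  -- `E f = f₀ + f₁ ∘ σM'` into ordinary intertwiners, itself an involution of `M' →ₗ V`.
  have hE : Involutive (Sig.evenPart + C * Sig.oddPart) :=
    involutive_evenPart_add_mul_oddPart hSig (fun g => LinearMap.ext fun x => by simp [C, hσM' x])
      (LinearMap.ext fun g => rfl)
  let E : S →ₗ[K] intertwiners ρM' ρ' := ((Sig.evenPart + C * Sig.oddPart) ∘ₗ S.subtype).codRestrict
    _ fun f => add_mem f.2.1 (comp_mem_intertwiners_of_odd hσB' hcompM' f.2.2)
  let σS : Module.End K S := Sig.restrict fun f hf => gradingConj_mem hf hσM' hσV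
  let tw : Module.End K (S ⊗[K] M') := map σS.evenPart 1 + map σS.oddPart σM'
  have key : lift S.subtype = lift (intertwiners ρM' ρ').subtype ∘ₗ E.rTensor M' ∘ₗ tw := by
    refine TensorProduct.ext' fun f m => ?_
    simp only [tw, E, σS, C, LinearMap.add_apply, map_add, map_tmul, LinearMap.rTensor_tmul,
      lift.tmul, LinearMap.codRestrict_apply, Submodule.subtype_apply, LinearMap.coe_comp,
      comp_apply, mul_apply, one_apply, coe_evenPart_restrict, coe_oddPart_restrict,
      evenPart_evenPart hSig, oddPart_evenPart hSig, evenPart_oddPart hSig, oddPart_oddPart hSig,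
      map_zero, add_zero, zero_add, LinearMap.lcomp_apply, hσM' m]
    rw [← LinearMap.add_apply, evenPart_add_oddPart]
  rw [key]
  exact (hM'.injective_lift_intertwiners hρM').comp
    ((Module.Flat.rTensor_preserves_injective_linearMap E
      fun f g hfg => Subtype.ext (hE.injective (congrArg Subtype.val hfg))).comp
    (involutive_map_evenPart_add_map_oddPart (S := σS) (fun f => Subtype.ext (hSig f))
      hσM').injective)

section Evaluation

variable [CharZero K] (hσM' : Involutive σM') (hσB' : Involutive σB')
  (hV : ∀ N : Submodule K V, N.map σV ≤ N → (∀ b, N.map (ρ b) ≤ N) →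
    (∀ b', N.map (ρ' b') ≤ N) → N = ⊥ ∨ N = ⊤)
include hσM' hσB' hV

theorem span_apply_eq_top {N : Submodule K (M' →ₗ[K] V)}
    (hNS : N ≤ superIntertwiners σB' ρM' ρ' σM' σV) (hNσ : ∀ f ∈ N, gradingConj σM' σV f ∈ N)
    (hNρ : ∀ b, ∀ f ∈ N, ρ b ∘ₗ f ∈ N) (hN : N ≠ ⊥) :
    Submodule.span K {v | ∃ f ∈ N, ∃ m, f m = v} = ⊤ := by
  set W := Submodule.span K {v | ∃ f ∈ N, ∃ m, f m = v}
  have hinv : ∀ T : Module.End K V, (∀ f ∈ N, ∀ m, T (f m) ∈ W) → W.map T ≤ W := by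
    intro T hT
    rw [Submodule.map_span_le]
    rintro _ ⟨f, hf, m, rfl⟩
    exact hT f hf m
  refine (hV _ (hinv _ fun f hf m => ?_) (fun b => hinv _ fun f hf m => ?_)
    (fun c => hinv _ fun f hf m => ?_)).resolve_left ?_
  · exact Submodule.subset_span ⟨_, hNσ f hf, σM' m, by simp [hσM' m]⟩
  · exact Submodule.subset_span ⟨_, hNρ b f hf, m, rfl⟩
  · obtain ⟨p, q, hp, hq, rfl⟩ := exists_add_eq (S := σB'.toLinearMap) hσB' c
    rw [map_add, LinearMap.add_apply]
    exact add_mem (Submodule.subset_span ⟨f, hf, ρM' p m, apply_of_even (hNS hf) hp m⟩)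
      (Submodule.subset_span ⟨_, hNσ f hf, ρM' q m, gradingConj_apply_of_odd (hNS hf) hq m⟩)
  · obtain ⟨f, hf, hf0⟩ := Submodule.exists_mem_ne_zero_of_ne_bot hN
    obtain ⟨m, hm⟩ : ∃ m, f m ≠ 0 := by
      by_contra! h
      exact hf0 (LinearMap.ext h)
    intro hbot
    have : f m ∈ W := Submodule.subset_span ⟨f, hf, m, rfl⟩
    rw [hbot] at this
    exact hm this

theorem surjective_lift (hσV : Involutive σV)
    (hSρ : ∀ b, ∀ f ∈ superIntertwiners σB' ρM' ρ' σM' σV,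
      ρ b ∘ₗ f ∈ superIntertwiners σB' ρM' ρ' σM' σV)
    (hS : superIntertwiners σB' ρM' ρ' σM' σV ≠ ⊥) :
    Surjective (lift (superIntertwiners σB' ρM' ρ' σM' σV).subtype) := by
  refine LinearMap.range_eq_top.mp (eq_top_iff.mpr ?_)
  rw [← span_apply_eq_top hσM' hσB' hV le_rfl (fun f hf => gradingConj_mem hf hσM' hσV) hSρ hS,
    Submodule.span_le]
  rintro _ ⟨f, hf, m, rfl⟩
  exact ⟨⟨f, hf⟩ ⊗ₜ m, rfl⟩

theorem eq_bot_or_eq_top (hinj : Injective (lift (superIntertwiners σB' ρM' ρ' σM' σV).subtype))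
    {m₀ : M'} (hm₀ : m₀ ≠ 0) {σM : Module.End K (superIntertwiners σB' ρM' ρ' σM' σV)}
    (hσM : ∀ f, (σM f : M' →ₗ[K] V) = gradingConj σM' σV f)
    {ρM : B → Module.End K (superIntertwiners σB' ρM' ρ' σM' σV)}
    (hρM : ∀ b f, (ρM b f : M' →ₗ[K] V) = ρ b ∘ₗ f)
    (N : Submodule K (superIntertwiners σB' ρM' ρ' σM' σV)) (hNσ : N.map σM ≤ N)
    (hNρ : ∀ b, N.map (ρM b) ≤ N) : N = ⊥ ∨ N = ⊤ := by
  refine or_iff_not_imp_left.mpr fun hN => eq_top_iff.mpr fun g _ => ?_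
  let ι := (superIntertwiners σB' ρM' ρ' σM' σV).subtype
  have hspan := span_apply_eq_top hσM' hσB' hV (N := N.map ι) (Submodule.map_subtype_le _ _)
    ?_ ?_ ?_
  · have hle : Submodule.span K {v | ∃ f ∈ N.map ι, ∃ m, f m = v} ≤
        LinearMap.range (lift ι ∘ₗ N.subtype.rTensor M') := by
      rw [Submodule.span_le]
      rintro _ ⟨_, ⟨f, hf, rfl⟩, m, rfl⟩
      exact ⟨⟨f, hf⟩ ⊗ₜ m, rfl⟩
    rw [hspan] at hle
    obtain ⟨t, ht⟩ := hle (Submodule.mem_top (x := (g : M' →ₗ[K] V) m₀))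
    exact N.mem_of_tmul_mem_range_rTensor hm₀ ⟨t, hinj ht⟩
  · rintro _ ⟨f, hf, rfl⟩
    exact ⟨σM f, hNσ ⟨f, hf, rfl⟩, hσM f⟩
  · rintro b _ ⟨f, hf, rfl⟩
    exact ⟨ρM b f, hNρ b ⟨f, hf, rfl⟩, hρM b f⟩
  · simpa using (Submodule.map_injective_of_injective (Submodule.injective_subtype _)).ne hN

end Evaluation

end superIntertwiners

end Super

theorem stmt_3_general
    (B B' : Type) [Ring B] [Algebra ℂ B] [Ring B'] [Algebra ℂ B']
    (σB : B ≃ₐ[ℂ] B) (hσB : ∀ b, σB (σB b) = b)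
    (σB' : B' ≃ₐ[ℂ] B') (hσB' : ∀ b, σB' (σB' b) = b)
    (hcount : ∃ (ι : Type) (_ : Module.Basis ι ℂ B'), Countable ι)
    (V : Type) [AddCommGroup V] [Module ℂ V]
    (ρ : B →ₐ[ℂ] Module.End ℂ V) (ρ' : B' →ₐ[ℂ] Module.End ℂ V)
    (σV : Module.End ℂ V) (hσV : σV * σV = 1)
    (hcomp : ∀ b, σV * ρ b = ρ (σB b) * σV)
    -- the two actions supercommute on homogeneous elements
    (hsc1 : ∀ (b : B) (b' : B'), (σB b = b ∨ σB' b' = b') →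
        ρ b * ρ' b' = ρ' b' * ρ b)
    (hsc2 : ∀ (b : B) (b' : B'), σB b = -b → σB' b' = -b' →
        ρ b * ρ' b' = -(ρ' b' * ρ b))
    -- `V` is a simple (graded) `R`-module
    (hVsimple : Nontrivial V ∧ ∀ N : Submodule ℂ V,
        N.map σV ≤ N → (∀ b, N.map (ρ b) ≤ N) → (∀ b', N.map (ρ' b') ≤ N) →
        N = ⊥ ∨ N = ⊤)
    -- a strictly simple `B'`-supermodule `M'` embedded `B'`-equivariantly in `V`
    (M' : Type) [AddCommGroup M'] [Module ℂ M']
    (ρM' : B' →ₐ[ℂ] Module.End ℂ M')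
    (σM' : Module.End ℂ M') (hσM' : σM' * σM' = 1)
    (hcompM' : ∀ b', σM' * ρM' b' = ρM' (σB' b') * σM')
    (emb : M' →ₗ[ℂ] V) (hinj : Function.Injective emb)
    (hequiv : ∀ b', emb ∘ₗ (ρM' b' : M' →ₗ[ℂ] M') = (ρ' b' : V →ₗ[ℂ] V) ∘ₗ emb)
    (hgr : emb ∘ₗ σM' = σV ∘ₗ emb)
    (hstrict : Nontrivial M' ∧ ∀ N : Submodule ℂ M',
        (∀ b', N.map (ρM' b') ≤ N) → N = ⊥ ∨ N = ⊤) :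
    ∃ (M : Type) (_ : AddCommGroup M) (_ : Module ℂ M)
      (ρM : B →ₐ[ℂ] Module.End ℂ M) (σM : Module.End ℂ M),
      σM * σM = 1 ∧ (∀ b, σM * ρM b = ρM (σB b) * σM) ∧
      -- `M` is a simple `B`-supermodule
      (Nontrivial M ∧ ∀ N : Submodule ℂ M,
          N.map σM ≤ N → (∀ b, N.map (ρM b) ≤ N) → N = ⊥ ∨ N = ⊤) ∧
      -- `V ≅ M ⊗ M'` as `R`-modules (intertwining the graded actions)
      ∃ φ : TensorProduct ℂ M M' ≃ₗ[ℂ] V,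
        (∀ b, φ.toLinearMap ∘ₗ
            TensorProduct.map (ρM b : M →ₗ[ℂ] M) (LinearMap.id : M' →ₗ[ℂ] M') =
            (ρ b : V →ₗ[ℂ] V) ∘ₗ φ.toLinearMap) ∧
        (∀ b', σB' b' = b' → φ.toLinearMap ∘ₗ
            TensorProduct.map (LinearMap.id : M →ₗ[ℂ] M) (ρM' b' : M' →ₗ[ℂ] M') =
            (ρ' b' : V →ₗ[ℂ] V) ∘ₗ φ.toLinearMap) ∧
        (∀ b', σB' b' = -b' → φ.toLinearMap ∘ₗ
            TensorProduct.map σM (ρM' b' : M' →ₗ[ℂ] M') =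
            (ρ' b' : V →ₗ[ℂ] V) ∘ₗ φ.toLinearMap) ∧
        φ.toLinearMap ∘ₗ TensorProduct.map σM σM' = σV ∘ₗ φ.toLinearMap := by
  have hσB'i : Involutive σB' := hσB'
  have hσVi : Involutive σV := fun v => LinearMap.congr_fun hσV v
  have hσM'i : Involutive σM' := fun x => LinearMap.congr_fun hσM' x
  obtain ⟨m₀, hm₀⟩ := @exists_ne _ hstrict.1 (0 : M')
  have hscalar : HasScalarCommutant ρM' := by
    obtain ⟨ι, bB', hι⟩ := hcount
    exact IsStrictlySimple.hasScalarCommutant (Cardinal.mk_complex ▸ Cardinal.aleph0_lt_continuum)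
      (bB'.mk_eq_rank'' ▸ Cardinal.mk_le_aleph0) hstrict
  have hemb : emb ∈ superIntertwiners σB' ρM' ρ' σM' σV :=
    superIntertwiners.mem_of_mem_intertwiners hσM'i
      (fun b' x => LinearMap.congr_fun (hequiv b') x) hgr
  have hS : superIntertwiners σB' ρM' ρ' σM' σV ≠ ⊥ :=
    (Submodule.ne_bot_iff _).mpr ⟨emb, hemb, fun h => hm₀ (hinj (by simp [h]))⟩
  have hSρ := fun b f (hf : f ∈ superIntertwiners σB' ρM' ρ' σM' σV) =>
    superIntertwiners.comp_mem hf hσB hσB' hcomp hsc1 hsc2 b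
  have hinjev := superIntertwiners.injective_lift (ρ' := ρ') hσM'i hσVi hσB'i hcompM' hstrict
    hscalar
  let σM : Module.End ℂ (superIntertwiners σB' ρM' ρ' σM' σV) :=
    (gradingConj σM' σV).restrict fun f hf => superIntertwiners.gradingConj_mem hf hσM'i hσVi
  let ρM := ((Algebra.lsmul ℂ ℂ (M' →ₗ[ℂ] V) (A := Module.End ℂ V)).comp ρ).restrictEnd _ hSρ
  refine ⟨_, _, _, ρM, σM, LinearMap.ext fun f => Subtype.ext (gradingConj_involutive hσM'i hσVi f),
    fun b => LinearMap.ext fun f => Subtype.ext <| LinearMap.ext fun x =>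
      LinearMap.congr_fun (hcomp b) _,
    ⟨Submodule.nontrivial_iff_ne_bot.mpr hS, superIntertwiners.eq_bot_or_eq_top hσM'i hσB'i
      hVsimple.2 hinjev hm₀ (fun _ => rfl) (fun _ _ => rfl)⟩,
    LinearEquiv.ofBijective _ ⟨hinjev,
      superIntertwiners.surjective_lift hσM'i hσB'i hVsimple.2 hσVi hSρ hS⟩,
    fun b => TensorProduct.ext' fun f m => rfl,
    fun b' hb' => TensorProduct.ext' fun f m => superIntertwiners.apply_of_even f.2 hb' m,
    fun b' hb' => TensorProduct.ext' fun f m =>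
      superIntertwiners.gradingConj_apply_of_odd f.2 hb' m,
    TensorProduct.ext' fun f m => congrArg (fun x => σV (f.1 x)) (hσM'i m)⟩

/-- Let `B`, `B'` be unital associative superalgebras (gradings given by
involutive automorphisms), `B'` with a countable basis, and let `V` be a simple module over
`R = B ⊗ B'` (encoded as a pair of supercommuting actions of `B` and `B'` on `V`,
compatible with the grading `σV`).  If `V` contains a strictly simple `B' = ℂ ⊗ B'`
submodule `M'` (given by the equivariant embedding `ι`), then `V ≅ M ⊗ M'` as
`R`-modules for some simple `B`-supermodule `M`. -/
theorem stmt_3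
    (B B' : Type) [Ring B] [Algebra ℂ B] [Ring B'] [Algebra ℂ B']
    (σB : B ≃ₐ[ℂ] B) (hσB : ∀ b, σB (σB b) = b)
    (σB' : B' ≃ₐ[ℂ] B') (hσB' : ∀ b, σB' (σB' b) = b)
    (hcount : ∃ (ι : Type) (_ : Module.Basis ι ℂ B'), Countable ι)
    (V : Type) [AddCommGroup V] [Module ℂ V]
    (ρ : B →ₐ[ℂ] Module.End ℂ V) (ρ' : B' →ₐ[ℂ] Module.End ℂ V)
    (σV : Module.End ℂ V) (hσV : σV * σV = 1)
    (hcomp : ∀ b, σV * ρ b = ρ (σB b) * σV)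
    (hcomp' : ∀ b', σV * ρ' b' = ρ' (σB' b') * σV)
    -- the two actions supercommute on homogeneous elements
    (hsc1 : ∀ (b : B) (b' : B'), (σB b = b ∨ σB' b' = b') →
        ρ b * ρ' b' = ρ' b' * ρ b)
    (hsc2 : ∀ (b : B) (b' : B'), σB b = -b → σB' b' = -b' →
        ρ b * ρ' b' = -(ρ' b' * ρ b))
    -- `V` is a simple (graded) `R`-module
    (hVsimple : Nontrivial V ∧ ∀ N : Submodule ℂ V,
        N.map σV ≤ N → (∀ b, N.map (ρ b) ≤ N) → (∀ b', N.map (ρ' b') ≤ N) →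
        N = ⊥ ∨ N = ⊤)
    -- a strictly simple `B'`-supermodule `M'` embedded `B'`-equivariantly in `V`
    (M' : Type) [AddCommGroup M'] [Module ℂ M']
    (ρM' : B' →ₐ[ℂ] Module.End ℂ M')
    (σM' : Module.End ℂ M') (hσM' : σM' * σM' = 1)
    (hcompM' : ∀ b', σM' * ρM' b' = ρM' (σB' b') * σM')
    (emb : M' →ₗ[ℂ] V) (hinj : Function.Injective emb)
    (hequiv : ∀ b', emb ∘ₗ (ρM' b' : M' →ₗ[ℂ] M') = (ρ' b' : V →ₗ[ℂ] V) ∘ₗ emb)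
    (hgr : emb ∘ₗ σM' = σV ∘ₗ emb)
    (hstrict : Nontrivial M' ∧ ∀ N : Submodule ℂ M',
        (∀ b', N.map (ρM' b') ≤ N) → N = ⊥ ∨ N = ⊤) :
    ∃ (M : Type) (_ : AddCommGroup M) (_ : Module ℂ M)
      (ρM : B →ₐ[ℂ] Module.End ℂ M) (σM : Module.End ℂ M),
      σM * σM = 1 ∧ (∀ b, σM * ρM b = ρM (σB b) * σM) ∧
      -- `M` is a simple `B`-supermodule
      (Nontrivial M ∧ ∀ N : Submodule ℂ M,
          N.map σM ≤ N → (∀ b, N.map (ρM b) ≤ N) → N = ⊥ ∨ N = ⊤) ∧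
      -- `V ≅ M ⊗ M'` as `R`-modules (intertwining the graded actions)
      ∃ φ : TensorProduct ℂ M M' ≃ₗ[ℂ] V,
        (∀ b, φ.toLinearMap ∘ₗ
            TensorProduct.map (ρM b : M →ₗ[ℂ] M) (LinearMap.id : M' →ₗ[ℂ] M') =
            (ρ b : V →ₗ[ℂ] V) ∘ₗ φ.toLinearMap) ∧
        (∀ b', σB' b' = b' → φ.toLinearMap ∘ₗ
            TensorProduct.map (LinearMap.id : M →ₗ[ℂ] M) (ρM' b' : M' →ₗ[ℂ] M') =
            (ρ' b' : V →ₗ[ℂ] V) ∘ₗ φ.toLinearMap) ∧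
        (∀ b', σB' b' = -b' → φ.toLinearMap ∘ₗ
            TensorProduct.map σM (ρM' b' : M' →ₗ[ℂ] M') =
            (ρ' b' : V →ₗ[ℂ] V) ∘ₗ φ.toLinearMap) ∧
        φ.toLinearMap ∘ₗ TensorProduct.map σM σM' = σV ∘ₗ φ.toLinearMap :=
  stmt_3_general B B' σB hσB σB' hσB' hcount V ρ ρ' σV hσV hcomp hsc1 hsc2 hVsimple M' ρM' σM' hσM'
    hcompM' emb hinj hequiv hgr hstrict
end

section
/- With Δ the root set of W_{m,0} as above, suppose α ∈ Δ is written as α₁ + α₂ where α₁ = Σ_{k∉C} b_k ε_k with b_k ∈ ℤ and α₂ = Σ_{i,j∈C} a_{ij}(ε_i - ε_j) for some subset C ⊆ {1,…,m}, and both α₁, α₂ are nonzero. If α = Σ_{i≠l} m_i ε_i - ε_l with l ∈ C and m_i ∈ ℤ₊, then α₂ = ε_k - ε_l for some k ∈ C, α₁ = Σ_{i≠l,k} m_i ε_i with all m_i ∈ ℤ₊, and both α₁ and α₂ lie in Δ. -/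
lemma span_aux {m : ℕ} (C : Set (Fin m)) (v : Fin m → ℤ)
    (hv : v ∈ Submodule.span ℤ {v : Fin m → ℤ | ∃ i ∈ C, ∃ j ∈ C,
        v = Pi.single i (1 : ℤ) - Pi.single j (1 : ℤ)}) :
    (∀ i, i ∉ C → v i = 0) ∧ ∑ i, v i = 0 := by
  induction hv using Submodule.span_induction with
  | mem x hx =>
    obtain ⟨i, hi, j, hj, rfl⟩ := hx
    constructor
    · intro a ha
      have h1 : a ≠ i := fun h => ha (h ▸ hi)
      have h2 : a ≠ j := fun h => ha (h ▸ hj)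
      simp [Pi.single_apply, h1, h2]
    · simp [Finset.sum_sub_distrib]
  | zero => simp
  | add x y _ _ hx hy =>
    exact ⟨fun i hi => by simp [hx.1 i hi, hy.1 i hi],
      by simp [Finset.sum_add_distrib, hx.2, hy.2]⟩
  | smul c x _ hx =>
    exact ⟨fun i hi => by simp [hx.1 i hi],
      by simp [← Finset.mul_sum, hx.2]⟩

/-- If `α = α₁ + α₂ ∈ Δ` with `α₁` supported off `C`, `α₂` an integer
combination of `ε_i - ε_j` with `i, j ∈ C`, both nonzero, and `α = Σ_{i≠l} m_i ε_i - ε_l`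
with `l ∈ C` and `m_i ∈ ℤ₊`, then `α₂ = ε_k - ε_l` for some `k ∈ C`,
`α₁ = Σ_{i ≠ l,k} m_i ε_i` has nonnegative coordinates, and both `α₁, α₂` lie in `Δ`. -/
theorem stmt_5 (m : ℕ) (C : Set (Fin m))
    (α₁ α₂ : Fin m → ℤ)
    (h1 : ∀ k ∈ C, α₁ k = 0)
    (h2 : α₂ ∈ Submodule.span ℤ {v : Fin m → ℤ | ∃ i ∈ C, ∃ j ∈ C,
        v = Pi.single i (1 : ℤ) - Pi.single j (1 : ℤ)})
    (hn1 : α₁ ≠ 0) (hn2 : α₂ ≠ 0)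
    (l : Fin m) (hl : l ∈ C)
    (hαl : (α₁ + α₂) l = -1)
    (hαpos : ∀ i, i ≠ l → 0 ≤ (α₁ + α₂) i) :
    ∃ k ∈ C, k ≠ l ∧ α₂ = Pi.single k (1 : ℤ) - Pi.single l (1 : ℤ) ∧
      α₁ k = 0 ∧ α₁ l = 0 ∧ (∀ i, 0 ≤ α₁ i) ∧
      (α₁ ≠ 0 ∧ ((∀ j, 0 ≤ α₁ j) ∨ ∃ i, α₁ i = -1 ∧ ∀ j, j ≠ i → 0 ≤ α₁ j)) ∧
      (α₂ ≠ 0 ∧ ((∀ j, 0 ≤ α₂ j) ∨ ∃ i, α₂ i = -1 ∧ ∀ j, j ≠ i → 0 ≤ α₂ j)) := by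
  obtain ⟨hoff, hsum⟩ := span_aux C α₂ h2
  have hαl1 : α₁ l = 0 := h1 l hl
  have hg_l : α₂ l = -1 := by have := hαl; simp [Pi.add_apply, hαl1] at this; linarith
  have hg_nonneg : ∀ i, i ≠ l → 0 ≤ α₂ i := by
    intro i hi
    by_cases hC : i ∈ C
    · have := hαpos i hi
      simp [Pi.add_apply, h1 i hC] at this
      exact this
    · simp [hoff i hC]
  -- sum over erase l
  have hsum' : ∑ i ∈ Finset.univ.erase l, α₂ i = 1 := by
    have := Finset.add_sum_erase Finset.univ α₂ (Finset.mem_univ l)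
    omega
  obtain ⟨k, hk_mem, hk_ne⟩ := Finset.exists_ne_zero_of_sum_ne_zero (by omega :
    ∑ i ∈ Finset.univ.erase l, α₂ i ≠ 0)
  have hkl : k ≠ l := (Finset.mem_erase.mp hk_mem).1
  have hk_pos : 1 ≤ α₂ k := by
    have := hg_nonneg k hkl; omega
  have hrest : ∑ i ∈ (Finset.univ.erase l).erase k, α₂ i = 1 - α₂ k := by
    have := Finset.add_sum_erase (Finset.univ.erase l) α₂ hk_mem
    omega
  have hrest_nonneg : 0 ≤ ∑ i ∈ (Finset.univ.erase l).erase k, α₂ i :=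
    Finset.sum_nonneg fun i hi => hg_nonneg i (Finset.mem_erase.mp (Finset.mem_erase.mp hi).2).1
  have hk1 : α₂ k = 1 := by omega
  have hzero : ∀ i ∈ (Finset.univ.erase l).erase k, α₂ i = 0 := by
    rw [← Finset.sum_eq_zero_iff_of_nonneg
      (fun i hi => hg_nonneg i (Finset.mem_erase.mp (Finset.mem_erase.mp hi).2).1)]
    omega
  have hkC : k ∈ C := by
    by_contra h
    exact hk_ne (hoff k h)
  have hform : α₂ = Pi.single k (1 : ℤ) - Pi.single l (1 : ℤ) := by
    funext i
    by_cases hik : i = k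
    · subst hik; simp [Pi.single_apply, hkl, hk1]
    · by_cases hil : i = l
      · subst hil; simp [Pi.single_apply, hik, hg_l]
      · have : α₂ i = 0 := hzero i (by simp [hik, hil])
        simp [Pi.single_apply, hik, hil, this]
  have hα₁nonneg : ∀ i, 0 ≤ α₁ i := by
    intro i
    by_cases hC : i ∈ C
    · simp [h1 i hC]
    · have hil : i ≠ l := fun h => hC (h ▸ hl)
      have := hαpos i hil
      simp [Pi.add_apply, hoff i hC] at this
      exact this
  exact ⟨k, hkC, hkl, hform, h1 k hkC, hαl1, hα₁nonneg,
    ⟨hn1, Or.inl hα₁nonneg⟩,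
    ⟨hn2, Or.inr ⟨l, hg_l, fun j hj => hg_nonneg j hj⟩⟩⟩
end

section
/- Let 𝔤 = 𝔪∇ ⋉ (𝔨 ⊗ A) where A = ℂ[t₁,…,t_q], 𝔪 ⊂ A the ideal generated by t₁,…,t_q, ∇ = span{∂₁,…,∂_q}, and 𝔨 a finite-dimensional Lie algebra. Let V be a simple 𝔤-module on which d = Σ_i t_i∂_i acts diagonalizably with eigenvalues in c + ℤ₊ for some c ∈ ℂ and with at least one eigenvector of eigenvalue c generating V. Then the ideal 𝔪²∇ ⋉ (𝔨 ⊗ 𝔪) annihilates V. -/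
open MvPolynomial

lemma euler_mono (q : ℕ) (s : Fin q →₀ ℕ) (a : ℂ) :
    mkDerivation ℂ (X : Fin q → MvPolynomial (Fin q) ℂ) (monomial s a)
      = ((s.sum fun _ e => e : ℕ) : ℂ) • monomial s a := by
  rw [mkDerivation_monomial]
  have h1 : ∀ i ∈ s.support,
      (monomial (s - Finsupp.single i 1) ((s i : ℂ))) • (X i : MvPolynomial (Fin q) ℂ)
        = monomial s ((s i : ℂ)) := by
    intro i hi
    rw [smul_eq_mul, X, monomial_mul, mul_one, tsub_add_cancel_of_le]
    rw [Finsupp.single_le_iff]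
    exact Nat.one_le_iff_ne_zero.2 (Finsupp.mem_support_iff.1 hi)
  rw [Finsupp.sum, Finset.sum_congr rfl h1, ← map_sum, smul_monomial, smul_monomial]
  congr 1
  rw [Finsupp.sum, Nat.cast_sum, smul_eq_mul, smul_eq_mul, mul_comm]

lemma mono_mem (q : ℕ) (s : Fin q →₀ ℕ) (a : ℂ) (hs : s ≠ 0) :
    monomial s a ∈ Ideal.span (Set.range (X : Fin q → MvPolynomial (Fin q) ℂ)) := by
  obtain ⟨i, hi⟩ : ∃ i, i ∈ s.support := by
    by_contra h
    push_neg at h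
    exact hs (Finsupp.ext fun i => by simpa [Finsupp.mem_support_iff] using h i)
  have : monomial s a = monomial (s - Finsupp.single i 1) a * X i := by
    rw [X, monomial_mul, mul_one, tsub_add_cancel_of_le]
    rw [Finsupp.single_le_iff]
    exact Nat.one_le_iff_ne_zero.2 (Finsupp.mem_support_iff.1 hi)
  rw [this]
  exact Ideal.mul_mem_left _ _ (Ideal.subset_span ⟨i, rfl⟩)

lemma const_zero (q : ℕ) (f : MvPolynomial (Fin q) ℂ)
    (hf : f ∈ Ideal.span (Set.range (X : Fin q → MvPolynomial (Fin q) ℂ))) :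
    constantCoeff f = 0 := by
  have : Ideal.span (Set.range (X : Fin q → MvPolynomial (Fin q) ℂ)) ≤
      RingHom.ker (constantCoeff (R := ℂ) (σ := Fin q)) := by
    rw [Ideal.span_le]
    rintro _ ⟨i, rfl⟩
    simp [RingHom.mem_ker]
  exact this hf

lemma sq_coeff (q : ℕ) (f : MvPolynomial (Fin q) ℂ)
    (hf : f ∈ (Ideal.span (Set.range (X : Fin q → MvPolynomial (Fin q) ℂ))) ^ 2)
    (s : Fin q →₀ ℕ) (hdeg : (s.sum fun _ e => e) ≤ 1) : coeff s f = 0 := by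
  rw [pow_two] at hf
  refine Submodule.mul_induction_on (C := fun f => coeff s f = 0) hf ?_ ?_
  · intro g hg h hh
    rw [coeff_mul]
    apply Finset.sum_eq_zero
    rintro ⟨u, v⟩ huv
    have huv' : u + v = s := Finset.HasAntidiagonal.mem_antidiagonal.1 huv
    have hsum : (u.sum fun _ e => e) + (v.sum fun _ e => e) = (s.sum fun _ e => e) := by
      rw [← huv', Finsupp.sum_add_index'] <;> simp
    rcases Nat.le_one_iff_eq_zero_or_eq_one.1 hdeg with h0 | h1
    · have hu : u = 0 := by
        have : (u.sum fun _ e => e) = 0 := by omega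
        ext i
        by_contra hi
        have := Finset.sum_eq_zero_iff.1 this i (Finsupp.mem_support_iff.2 hi)
        exact hi this
      rw [hu]
      have : coeff 0 g = 0 := const_zero q g hg
      simp [this]
    · -- one of u, v has degree 0
      rcases Nat.add_eq_one_iff.1 (by omega :
          (u.sum fun _ e => e) + (v.sum fun _ e => e) = 1) with ⟨hu0, _⟩ | ⟨_, hv0⟩
      · have hu : u = 0 := by
          ext i
          by_contra hi
          have := Finset.sum_eq_zero_iff.1 hu0 i (Finsupp.mem_support_iff.2 hi)
          exact hi this
        rw [hu]
        have : coeff 0 g = 0 := const_zero q g hg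
        simp [this]
      · have hv : v = 0 := by
          ext i
          by_contra hi
          have := Finset.sum_eq_zero_iff.1 hv0 i (Finsupp.mem_support_iff.2 hi)
          exact hi this
        rw [hv]
        have : coeff 0 h = 0 := const_zero q h hh
        simp [this]
  · intro a b ha hb
    simp only [coeff_add, ha, hb, add_zero]

lemma deriv_sum_apply (q : ℕ) {ι : Type} (t : Finset ι)
    (g : ι → Derivation ℂ (MvPolynomial (Fin q) ℂ) (MvPolynomial (Fin q) ℂ))
    (p : MvPolynomial (Fin q) ℂ) : (∑ i ∈ t, g i) p = ∑ i ∈ t, g i p :=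
  map_sum (AddMonoidHom.mk'
    (fun E : Derivation ℂ (MvPolynomial (Fin q) ℂ) (MvPolynomial (Fin q) ℂ) => E p)
    (fun _ _ => Derivation.add_apply _)) g t

lemma deriv_decomp (q : ℕ) (D : Derivation ℂ (MvPolynomial (Fin q) ℂ) (MvPolynomial (Fin q) ℂ)) :
    D = ∑ i, ∑ s ∈ (D (X i)).support,
      mkDerivation ℂ (Pi.single i (monomial s (coeff s (D (X i))))) := by
  have h2 : ∀ (E : Derivation ℂ (MvPolynomial (Fin q) ℂ) (MvPolynomial (Fin q) ℂ)),
      (mkDerivationEquiv ℂ).symm E = fun i => E (X i) := fun _ => rfl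
  apply (mkDerivationEquiv ℂ (σ := Fin q)).symm.injective
  rw [map_sum]
  simp only [map_sum, h2]
  funext j
  simp only [deriv_sum_apply, mkDerivation_X]
  rw [Finset.sum_apply]
  have h3 : ∀ x : Fin q, (fun i => ∑ s ∈ (D (X x)).support,
        (Pi.single x (monomial s (coeff s (D (X x)))) : Fin q → MvPolynomial (Fin q) ℂ) i) j
      = if j = x then D (X x) else 0 := by
    intro x
    by_cases h : j = x
    · subst h; simp [Pi.single_eq_same, support_sum_monomial_coeff]
    · simp [Pi.single_apply, h]
  rw [Finset.sum_congr rfl (fun x _ => h3 x), Finset.sum_ite_eq]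
  simp

lemma finsupp_deg_zero {q : ℕ} {s : Fin q →₀ ℕ} (h : (s.sum fun _ e => e) = 0) : s = 0 := by
  ext i
  by_contra hi
  exact hi (Finset.sum_eq_zero_iff.1 h i (Finsupp.mem_support_iff.2 hi))

lemma key_map {V : Type} [AddCommGroup V] [Module ℂ V] (dh T : Module.End ℂ V) (n : ℂ)
    (h : dh * T - T * dh = n • T) (μ : ℂ) (w : V) (hw : w ∈ dh.eigenspace μ) :
    T w ∈ dh.eigenspace (μ + n) := by
  rw [Module.End.mem_eigenspace_iff] at hw ⊢
  have h' := congrArg (fun L : Module.End ℂ V => L w) h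
  simp only [LinearMap.sub_apply, Module.End.mul_apply, LinearMap.smul_apply] at h'
  rw [hw, map_smul] at h'
  have : dh (T w) = μ • T w + n • T w := by
    rw [← h']; abel
  rw [this, ← add_smul]

/-- Let `𝔤 = 𝔪∇ ⋉ (𝔨 ⊗ A)` with `A = ℂ[t₁,…,t_q]`, `𝔪` the maximal ideal
at `0`, `𝔨` a finite-dimensional Lie algebra.  A `𝔤`-module is encoded by the actions
`ρ₁` (of vector fields in `𝔪∇`) and `ρ₂` (of `𝔨 ⊗ A`, given bilinearly) subject to the
bracket relations.  If `V` is a simple `𝔤`-module on which `d = Σ t_i∂_i` acts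
diagonalizably with eigenvalues in `c + ℤ₊` and with an eigenvector of eigenvalue `c`,
then the ideal `𝔪²∇ ⋉ (𝔨 ⊗ 𝔪)` annihilates `V`. -/
theorem stmt_8 (q : ℕ) (k : Type) [LieRing k] [LieAlgebra ℂ k] [FiniteDimensional ℂ k]
    (V : Type) [AddCommGroup V] [Module ℂ V]
    (𝔪 : Ideal (MvPolynomial (Fin q) ℂ))
    (h𝔪 : 𝔪 = Ideal.span (Set.range (X : Fin q → MvPolynomial (Fin q) ℂ)))
    (ρ₁ : Derivation ℂ (MvPolynomial (Fin q) ℂ) (MvPolynomial (Fin q) ℂ) →ₗ[ℂ]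
        Module.End ℂ V)
    (ρ₂ : k →ₗ[ℂ] MvPolynomial (Fin q) ℂ →ₗ[ℂ] Module.End ℂ V)
    (hrep1 : ∀ D E, (∀ i, D (X i) ∈ 𝔪) → (∀ i, E (X i) ∈ 𝔪) →
        ρ₁ ⁅D, E⁆ = ρ₁ D * ρ₁ E - ρ₁ E * ρ₁ D)
    (hrep2 : ∀ (x y : k) (f g : MvPolynomial (Fin q) ℂ),
        ρ₂ ⁅x, y⁆ (f * g) = ρ₂ x f * ρ₂ y g - ρ₂ y g * ρ₂ x f)
    (hrep3 : ∀ D, (∀ i, D (X i) ∈ 𝔪) → ∀ (x : k) (f : MvPolynomial (Fin q) ℂ),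
        ρ₂ x (D f) = ρ₁ D * ρ₂ x f - ρ₂ x f * ρ₁ D)
    -- `V` is simple
    (hsimple : Nontrivial V ∧ ∀ N : Submodule ℂ V,
        (∀ D, (∀ i, D (X i) ∈ 𝔪) → N.map (ρ₁ D) ≤ N) →
        (∀ (x : k) (f : MvPolynomial (Fin q) ℂ), N.map (ρ₂ x f) ≤ N) →
        N = ⊥ ∨ N = ⊤)
    (c : ℂ)
    -- `d = Σ tᵢ∂ᵢ` acts diagonalizably with eigenvalues in `c + ℤ₊`
    (hdiag : ⨆ j : ℕ, (ρ₁ (MvPolynomial.mkDerivation ℂ X)).eigenspace (c + j) = ⊤)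
    -- an eigenvector of eigenvalue `c` (it generates `V` by simplicity)
    (hvec : ∃ v : V, v ≠ 0 ∧ ρ₁ (MvPolynomial.mkDerivation ℂ X) v = c • v) :
    (∀ D, (∀ i, D (X i) ∈ 𝔪 ^ 2) → ρ₁ D = 0) ∧
    (∀ (x : k) (f : MvPolynomial (Fin q) ℂ), f ∈ 𝔪 → ρ₂ x f = 0) := by
  obtain ⟨v, hv0, hvc⟩ := hvec
  set d : Derivation ℂ (MvPolynomial (Fin q) ℂ) (MvPolynomial (Fin q) ℂ) :=
    mkDerivation ℂ X with hd
  set dh : Module.End ℂ V := ρ₁ d with hdh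
  have hdm : ∀ i, d (X i) ∈ 𝔪 := by
    intro i
    rw [hd, mkDerivation_X, h𝔪]
    exact Ideal.subset_span ⟨i, rfl⟩
  -- commutator relation for k ⊗ monomial
  have com2 : ∀ (x : k) (s : Fin q →₀ ℕ) (a : ℂ),
      dh * ρ₂ x (monomial s a) - ρ₂ x (monomial s a) * dh
        = ((s.sum fun _ e => e : ℕ) : ℂ) • ρ₂ x (monomial s a) := by
    intro x s a
    have h := hrep3 d hdm x (monomial s a)
    rw [hd, euler_mono, map_smul] at h
    exact h.symm
  -- commutator relation for monomial vector fields
  have com1 : ∀ (i : Fin q) (s : Fin q →₀ ℕ) (a : ℂ), s ≠ 0 →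
      dh * ρ₁ (mkDerivation ℂ (Pi.single i (monomial s a)))
        - ρ₁ (mkDerivation ℂ (Pi.single i (monomial s a))) * dh
      = (((s.sum fun _ e => e : ℕ) : ℂ) - 1) • ρ₁ (mkDerivation ℂ (Pi.single i (monomial s a))) := by
    intro i s a hs
    set E : Derivation ℂ (MvPolynomial (Fin q) ℂ) (MvPolynomial (Fin q) ℂ) :=
      mkDerivation ℂ (Pi.single i (monomial s a)) with hE
    have hEm : ∀ j, E (X j) ∈ 𝔪 := by
      intro j
      rw [hE, mkDerivation_X]
      by_cases h : j = i
      · subst h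
        rw [Pi.single_eq_same, h𝔪]
        exact mono_mem q s a hs
      · rw [Pi.single_eq_of_ne h]
        exact zero_mem 𝔪
    have hbr : ⁅d, E⁆ = (((s.sum fun _ e => e : ℕ) : ℂ) - 1) • E := by
      apply derivation_ext
      intro j
      rw [Derivation.commutator_apply, Derivation.smul_apply]
      simp only [hE, hd, mkDerivation_X]
      by_cases h : j = i
      · subst h
        rw [Pi.single_eq_same, euler_mono, sub_smul, one_smul]
      · simp [Pi.single_eq_of_ne h]
    have h := hrep1 d E hdm hEm
    rw [hbr, map_smul] at h
    exact h.symm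
  -- pointwise decompositions
  have dec2 : ∀ (x : k) (f : MvPolynomial (Fin q) ℂ) (w : V),
      ρ₂ x f w = ∑ s ∈ f.support, ρ₂ x (monomial s (coeff s f)) w := by
    intro x f w
    conv_lhs => rw [← support_sum_monomial_coeff f]
    rw [map_sum, LinearMap.sum_apply]
  have dec1 : ∀ (D : Derivation ℂ (MvPolynomial (Fin q) ℂ) (MvPolynomial (Fin q) ℂ)) (w : V),
      ρ₁ D w = ∑ i, ∑ s ∈ (D (X i)).support,
        ρ₁ (mkDerivation ℂ (Pi.single i (monomial s (coeff s (D (X i)))))) w := by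
    intro D w
    conv_lhs => rw [deriv_decomp q D]
    rw [map_sum]
    rw [LinearMap.sum_apply]
    refine Finset.sum_congr rfl fun i _ => ?_
    rw [map_sum, LinearMap.sum_apply]
  -- the submodule N
  set N : Submodule ℂ V := ⨆ j : ℕ, dh.eigenspace (c + ((j : ℂ) + 1)) with hN
  have mem_N : ∀ (j : ℕ) (w : V), w ∈ dh.eigenspace (c + ((j : ℂ) + 1)) → w ∈ N := by
    intro j w hw
    exact (le_iSup (fun j : ℕ => dh.eigenspace (c + ((j : ℂ) + 1))) j) hw
  -- invariance of N
  have inv1 : ∀ D, (∀ i, D (X i) ∈ 𝔪) → N.map (ρ₁ D) ≤ N := by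
    intro D hD
    rw [hN, Submodule.map_iSup]
    apply iSup_le
    intro j
    rw [Submodule.map_le_iff_le_comap]
    intro w hw
    rw [Submodule.mem_comap]
    show ρ₁ D w ∈ N
    rw [dec1 D w]
    apply Submodule.sum_mem
    intro i _
    apply Submodule.sum_mem
    intro s hs
    have hs0 : s ≠ 0 := by
      intro h0
      apply Finsupp.mem_support_iff.1 hs
      rw [h0]
      exact const_zero q _ (h𝔪 ▸ hD i)
    obtain ⟨m, hm⟩ : ∃ m : ℕ, (s.sum fun _ e => e) = m + 1 := by
      rcases Nat.exists_eq_succ_of_ne_zero (fun h => hs0 (finsupp_deg_zero h)) with ⟨m, hm⟩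
      exact ⟨m, hm⟩
    have hk := key_map dh _ _ (com1 i s (coeff s (D (X i))) hs0) _ w hw
    have harg : c + ((j : ℂ) + 1) + (((s.sum fun _ e => e : ℕ) : ℂ) - 1)
        = c + (((j + m : ℕ) : ℂ) + 1) := by
      rw [hm]; push_cast; ring
    rw [harg] at hk
    exact mem_N (j + m) _ hk
  have inv2 : ∀ (x : k) (f : MvPolynomial (Fin q) ℂ), N.map (ρ₂ x f) ≤ N := by
    intro x f
    rw [hN, Submodule.map_iSup]
    apply iSup_le
    intro j
    rw [Submodule.map_le_iff_le_comap]
    intro w hw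
    rw [Submodule.mem_comap]
    show ρ₂ x f w ∈ N
    rw [dec2 x f w]
    apply Submodule.sum_mem
    intro s _
    have hk := key_map dh _ _ (com2 x s (coeff s f)) _ w hw
    have harg : c + ((j : ℂ) + 1) + ((s.sum fun _ e => e : ℕ) : ℂ)
        = c + (((j + (s.sum fun _ e => e) : ℕ) : ℂ) + 1) := by
      push_cast; ring
    rw [harg] at hk
    exact mem_N _ _ hk
  -- v is not in N
  have hvN : v ∉ N := by
    intro hvN
    have hdisj : Disjoint (dh.eigenspace c) (⨆ (μ : ℂ) (_ : μ ≠ c), dh.eigenspace μ) :=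
      dh.eigenspaces_iSupIndep c
    have hNle : N ≤ ⨆ (μ : ℂ) (_ : μ ≠ c), dh.eigenspace μ := by
      rw [hN]
      apply iSup_le
      intro j
      refine le_iSup₂ (f := fun (μ : ℂ) (_ : μ ≠ c) => dh.eigenspace μ) (c + ((j : ℂ) + 1)) ?_
      intro h
      have h1 : ((j : ℂ) + 1) = 0 := by
        linear_combination h
      have : ((j + 1 : ℕ) : ℂ) = 0 := by push_cast; linear_combination h1
      exact Nat.succ_ne_zero j (Nat.cast_injective (R := ℂ) (this.trans (Nat.cast_zero).symm))
    have hvmem : v ∈ dh.eigenspace c := Module.End.mem_eigenspace_iff.2 hvc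
    have hbot : v ∈ (⊥ : Submodule ℂ V) :=
      hdisj.le_bot (Submodule.mem_inf.2 ⟨hvmem, hNle hvN⟩)
    exact hv0 (Submodule.mem_bot ℂ |>.1 hbot)
  have hNbot : N = ⊥ := by
    rcases hsimple.2 N inv1 inv2 with h | h
    · exact h
    · exact absurd (h ▸ Submodule.mem_top) hvN
  -- conclusions
  constructor
  · intro D hD
    apply LinearMap.ext
    intro w
    rw [LinearMap.zero_apply]
    have hw : w ∈ (⊤ : Submodule ℂ V) := Submodule.mem_top
    have hker : (⊤ : Submodule ℂ V) ≤ LinearMap.ker (ρ₁ D) := by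
      rw [← hdiag]
      apply iSup_le
      intro j u hu
      rw [LinearMap.mem_ker, dec1 D u]
      apply Finset.sum_eq_zero
      intro i _
      apply Finset.sum_eq_zero
      intro s hs
      have hcf : coeff s (D (X i)) ≠ 0 := Finsupp.mem_support_iff.1 hs
      have hdeg2 : 2 ≤ (s.sum fun _ e => e) := by
        by_contra h
        exact hcf (sq_coeff q _ (h𝔪 ▸ hD i) s (by omega))
      obtain ⟨m, hm⟩ : ∃ m : ℕ, (s.sum fun _ e => e) = m + 2 := ⟨_, (Nat.sub_add_cancel hdeg2).symm⟩
      have hs0 : s ≠ 0 := fun h0 => by simp [h0, Finsupp.sum_zero_index] at hm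
      have hk := key_map dh _ _ (com1 i s (coeff s (D (X i))) hs0) _ u hu
      have harg : c + (j : ℂ) + (((s.sum fun _ e => e : ℕ) : ℂ) - 1)
          = c + (((j + m : ℕ) : ℂ) + 1) := by
        rw [hm]; push_cast; ring
      rw [harg] at hk
      have := mem_N _ _ hk
      rw [hNbot] at this
      exact Submodule.mem_bot ℂ |>.1 this
    exact LinearMap.mem_ker.1 (hker hw)
  · intro x f hf
    apply LinearMap.ext
    intro w
    rw [LinearMap.zero_apply]
    have hw : w ∈ (⊤ : Submodule ℂ V) := Submodule.mem_top
    have hker : (⊤ : Submodule ℂ V) ≤ LinearMap.ker (ρ₂ x f) := by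
      rw [← hdiag]
      apply iSup_le
      intro j u hu
      rw [LinearMap.mem_ker, dec2 x f u]
      apply Finset.sum_eq_zero
      intro s hs
      have hcf : coeff s f ≠ 0 := Finsupp.mem_support_iff.1 hs
      have hs0 : s ≠ 0 := by
        intro h0
        apply hcf
        rw [h0]
        exact const_zero q _ (h𝔪 ▸ hf)
      obtain ⟨m, hm⟩ : ∃ m : ℕ, (s.sum fun _ e => e) = m + 1 :=
        Nat.exists_eq_succ_of_ne_zero (fun h => hs0 (finsupp_deg_zero h))
      have hk := key_map dh _ _ (com2 x s (coeff s f)) _ u hu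
      have harg : c + (j : ℂ) + ((s.sum fun _ e => e : ℕ) : ℂ)
          = c + (((j + m : ℕ) : ℂ) + 1) := by
        rw [hm]; push_cast; ring
      rw [harg] at hk
      have := mem_N _ _ hk
      rw [hNbot] at this
      exact Submodule.mem_bot ℂ |>.1 this
    exact LinearMap.mem_ker.1 (hker hw)
end

section
/- Let M be a simple weight module over sl2 with finite-dimensional weight spaces, and let α be a root with root vectors e_α, e_{-α} both acting locally nilpotently on M. Then the sl2-subalgebra spanned by e_α, e_{-α}, [e_α,e_{-α}] acts locally finitely on M, supp(M) is invariant under the reflection r_α(λ) = λ - λ(h_α)α, and if λ ∈ supp(M) with λ + α ∉ supp(M), then λ(h_α) ∈ ℤ₊. -/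
def Qop {V : Type} [AddCommGroup V] [Module ℂ V]
    (h : Module.End ℂ V) (a : ℕ → ℂ) : ℕ → Module.End ℂ V
  | 0 => 1
  | n + 1 => Qop h a n * (h - a n • 1)

lemma Qop_apply_eig {V : Type} [AddCommGroup V] [Module ℂ V]
    (h : Module.End ℂ V) (a : ℕ → ℂ) (c : ℂ) (x : V) (hx : h x = c • x) :
    ∀ n : ℕ, Qop h a n x = (∏ k ∈ Finset.range n, (c - a k)) • x
  | 0 => by simp [Qop]
  | n + 1 => by
    have h1 : (h - a n • 1) x = (c - a n) • x := by
      simp [LinearMap.sub_apply, hx, sub_smul]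
    rw [Qop, Module.End.mul_apply, h1, map_smul, Qop_apply_eig h a c x hx n,
      smul_smul, Finset.prod_range_succ, mul_comm]

/-- let `M` be a simple weight sl₂-module with finite-dimensional weight
spaces on which both root vectors `e = e_α` and `f = e_{-α}` act locally nilpotently.
Then sl₂ acts locally finitely on `M`, the support of `M` is invariant under the
reflection `r_α` (on `h`-eigenvalues, `μ ↦ -μ`), and any `μ ∈ supp(M)` with
`μ + 2 ∉ supp(M)` (i.e. `λ + α ∉ supp(M)`) satisfies `μ = λ(h_α) ∈ ℤ₊`. -/
theorem stmt_13 (V : Type) [AddCommGroup V] [Module ℂ V]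
    (e f h : Module.End ℂ V)
    (he : h * e - e * h = 2 • e)
    (hf : h * f - f * h = -(2 • f))
    (hef : e * f - f * e = h)
    (hweight : ⨆ μ : ℂ, h.eigenspace μ = ⊤)
    (hfd : ∀ μ : ℂ, FiniteDimensional ℂ (h.eigenspace μ))
    (hsimple : Nontrivial V ∧ ∀ N : Submodule ℂ V,
        N.map e ≤ N → N.map f ≤ N → N.map h ≤ N → N = ⊥ ∨ N = ⊤)
    (hloce : ∀ v : V, ∃ N : ℕ, (e ^ N) v = 0)
    (hlocf : ∀ v : V, ∃ N : ℕ, (f ^ N) v = 0) :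
    (∀ v : V, ∃ N : Submodule ℂ V, FiniteDimensional ℂ N ∧ v ∈ N ∧
        N.map e ≤ N ∧ N.map f ≤ N ∧ N.map h ≤ N) ∧
    (∀ μ : ℂ, h.eigenspace μ ≠ ⊥ → h.eigenspace (-μ) ≠ ⊥) ∧
    (∀ μ : ℂ, h.eigenspace μ ≠ ⊥ → h.eigenspace (μ + 2) = ⊥ → ∃ k : ℕ, μ = k) := by
  classical
  -- pointwise commutation relations
  have he' : ∀ x : V, h (e x) = e (h x) + (e x + e x) := by
    intro x
    have h1 : (h * e - e * h) x = (2 • e) x := by rw [he]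
    simp only [LinearMap.sub_apply, Module.End.mul_apply, LinearMap.smul_apply,
      LinearMap.add_apply, two_smul] at h1
    have h2 := eq_add_of_sub_eq h1
    rw [h2]; abel
  have hf' : ∀ x : V, h (f x) = f (h x) + (-(f x + f x)) := by
    intro x
    have h1 : (h * f - f * h) x = (-(2 • f)) x := by rw [hf]
    simp only [LinearMap.sub_apply, Module.End.mul_apply, LinearMap.neg_apply,
      LinearMap.add_apply, LinearMap.smul_apply, two_smul] at h1
    have h2 := eq_add_of_sub_eq h1
    rw [h2]; abel
  have hef' : ∀ x : V, e (f x) = f (e x) + h x := by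
    intro x
    have h1 : (e * f - f * e) x = h x := by rw [hef]
    simp only [LinearMap.sub_apply, Module.End.mul_apply] at h1
    have h2 := eq_add_of_sub_eq h1
    rw [h2]; abel
  -- raising/lowering
  have he2 : ∀ (c : ℂ) (x : V), h x = c • x → h (e x) = (c + 2) • e x := by
    intro c x hx
    rw [he' x, hx, map_smul, add_smul, two_smul]
    try abel
  have hf2 : ∀ (c : ℂ) (x : V), h x = c • x → h (f x) = (c - 2) • f x := by
    intro c x hx
    rw [hf' x, hx, map_smul, sub_smul, two_smul]
    try abel
  -- there is a nonzero weight vector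
  have hexists : ∃ μ0 : ℂ, h.eigenspace μ0 ≠ ⊥ := by
    by_contra hc
    push_neg at hc
    have h1 : (⊤ : Submodule ℂ V) = ⊥ := by rw [← hweight]; exact iSup_eq_bot.mpr hc
    obtain ⟨a, b, hab⟩ := hsimple.1
    apply hab
    have ha : a ∈ (⊥ : Submodule ℂ V) := h1 ▸ Submodule.mem_top
    have hb : b ∈ (⊥ : Submodule ℂ V) := h1 ▸ Submodule.mem_top
    simp only [Submodule.mem_bot] at ha hb
    rw [ha, hb]
  obtain ⟨μ0, hμ0⟩ := hexists
  obtain ⟨v0, hv0mem, hv00⟩ := Submodule.exists_mem_ne_zero_of_ne_bot hμ0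
  have hv0 : h v0 = μ0 • v0 := Module.End.mem_eigenspace_iff.mp hv0mem
  -- highest weight vector w
  set N := Nat.find (hloce v0) with hNdef
  have hNspec : (e ^ N) v0 = 0 := Nat.find_spec (hloce v0)
  have hN1 : 1 ≤ N := by
    rcases Nat.eq_zero_or_pos N with h0 | h0
    · exfalso; apply hv00; simpa [h0] using hNspec
    · exact h0
  set w : V := (e ^ (N - 1)) v0 with hwdef
  have hw0 : w ≠ 0 := Nat.find_min (hloce v0) (by omega)
  have hew : e w = 0 := by
    have : e ((e ^ (N - 1)) v0) = (e ^ ((N - 1) + 1)) v0 := by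
      rw [pow_succ', Module.End.mul_apply]
    rw [hwdef, this, Nat.sub_add_cancel hN1, hNspec]
  -- weight of w
  have hwk : ∀ k : ℕ, h ((e ^ k) v0) = (μ0 + 2 * k) • (e ^ k) v0 := by
    intro k
    induction k with
    | zero => simpa using hv0
    | succ k ih =>
      have hp : (e ^ (k + 1)) v0 = e ((e ^ k) v0) := by
        rw [pow_succ', Module.End.mul_apply]
      rw [hp]
      have := he2 _ _ ih
      rw [this]
      push_cast
      ring_nf
  set L : ℂ := μ0 + 2 * (N - 1 : ℕ) with hLdef
  have hwL : h w = L • w := hwk (N - 1)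
  -- the string f^k w
  have hpowf : ∀ k : ℕ, (f ^ (k + 1)) w = f ((f ^ k) w) := by
    intro k; rw [pow_succ', Module.End.mul_apply]
  have hhk : ∀ k : ℕ, h ((f ^ k) w) = (L - 2 * k) • (f ^ k) w := by
    intro k
    induction k with
    | zero => simpa using hwL
    | succ k ih =>
      rw [hpowf k]
      have := hf2 _ _ ih
      rw [this]
      push_cast
      ring_nf
  have hek : ∀ k : ℕ, e ((f ^ (k + 1)) w) = (((k : ℂ) + 1) * (L - k)) • (f ^ k) w := by
    intro k
    induction k with
    | zero =>
      rw [hpowf 0, hef' _]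
      simp [hew, hwL]
    | succ k ih =>
      rw [hpowf (k + 1), hef' _, ih, map_smul, ← hpowf k, hhk (k + 1)]
      rw [← add_smul]
      congr 1
      push_cast
      ring
  -- minimal n with f^n w = 0
  set n := Nat.find (hlocf w) with hndef
  have hnspec : (f ^ n) w = 0 := Nat.find_spec (hlocf w)
  have hn1 : 1 ≤ n := by
    rcases Nat.eq_zero_or_pos n with h0 | h0
    · exfalso; apply hw0; simpa [h0] using hnspec
    · exact h0
  have hfknz : ∀ k : ℕ, k < n → (f ^ k) w ≠ 0 := fun k hk => Nat.find_min (hlocf w) hk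
  have hfkz : ∀ k : ℕ, n ≤ k → (f ^ k) w = 0 := by
    intro k hk
    have hsplit : f ^ k = f ^ (k - n) * f ^ n := by
      rw [← pow_add]; congr 1; omega
    rw [hsplit, Module.End.mul_apply, hnspec, map_zero]
  -- L = n - 1
  have hL : L = (n : ℂ) - 1 := by
    have h1 : e ((f ^ ((n - 1) + 1)) w) = 0 := by
      rw [Nat.sub_add_cancel hn1, hnspec, map_zero]
    rw [hek (n - 1)] at h1
    have h2 := smul_eq_zero.mp h1
    rcases h2 with h2 | h2
    · have hcast : ((n - 1 : ℕ) : ℂ) = (n : ℂ) - 1 := by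
        rw [Nat.cast_sub hn1, Nat.cast_one]
      rw [hcast] at h2
      have hne : ((n : ℂ) - 1) + 1 ≠ 0 := by
        have hn0 : (n : ℂ) ≠ 0 := Nat.cast_ne_zero.mpr (by omega)
        intro hcon
        exact hn0 (by linear_combination hcon)
      rcases mul_eq_zero.mp h2 with h3 | h3
      · exact absurd h3 hne
      · rw [hcast] at *
        linear_combination h3
    · exact absurd h2 (hfknz (n - 1) (by omega))
  -- the span W
  set W : Submodule ℂ V := Submodule.span ℂ (Set.range fun k : ℕ => (f ^ k) w) with hWdef
  have hmemW : ∀ k : ℕ, (f ^ k) w ∈ W := fun k => Submodule.subset_span ⟨k, rfl⟩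
  have hWe : W.map e ≤ W := by
    rw [Submodule.map_le_iff_le_comap, hWdef, Submodule.span_le]
    rintro x ⟨k, rfl⟩
    simp only [SetLike.mem_coe, Submodule.mem_comap]
    cases k with
    | zero => simpa [hew] using W.zero_mem
    | succ k =>
      rw [hek k]
      exact W.smul_mem _ (hmemW k)
  have hWf : W.map f ≤ W := by
    rw [Submodule.map_le_iff_le_comap, hWdef, Submodule.span_le]
    rintro x ⟨k, rfl⟩
    simp only [SetLike.mem_coe, Submodule.mem_comap]
    rw [← hpowf k]
    exact hmemW (k + 1)
  have hWh : W.map h ≤ W := by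
    rw [Submodule.map_le_iff_le_comap, hWdef, Submodule.span_le]
    rintro x ⟨k, rfl⟩
    simp only [SetLike.mem_coe, Submodule.mem_comap]
    rw [hhk k]
    exact W.smul_mem _ (hmemW k)
  have hWne : W ≠ ⊥ := by
    intro hW
    apply hw0
    have : w ∈ W := by simpa using hmemW 0
    rw [hW, Submodule.mem_bot] at this
    exact this
  have hWtop : W = ⊤ := (hsimple.2 W hWe hWf hWh).resolve_left hWne
  -- finite dimensionality
  have hWfin : FiniteDimensional ℂ W := by
    apply FiniteDimensional.span_of_finite
    apply Set.Finite.subset (((Set.finite_Iic n).image fun k : ℕ => (f ^ k) w))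
    rintro x ⟨k, rfl⟩
    by_cases hk : k ≤ n
    · exact ⟨k, hk, rfl⟩
    · refine ⟨n, le_refl n, ?_⟩
      show (f ^ n) w = (f ^ k) w
      rw [hnspec, hfkz k (by omega)]
  have hVfin : FiniteDimensional ℂ V := by
    rw [hWtop] at hWfin
    exact Module.Finite.equiv (Submodule.topEquiv)
  -- support characterization
  have hsupp : ∀ μ : ℂ, h.eigenspace μ ≠ ⊥ → ∃ k : ℕ, k < n ∧ μ = L - 2 * k := by
    intro μ hμ
    obtain ⟨x, hxmem, hx0⟩ := Submodule.exists_mem_ne_zero_of_ne_bot hμ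
    have hxe : h x = μ • x := Module.End.mem_eigenspace_iff.mp hxmem
    set P : Module.End ℂ V := Qop h (fun k => L - 2 * k) n with hPdef
    have hP0 : ∀ y : V, P y = 0 := by
      intro y
      have hy : y ∈ W := hWtop ▸ Submodule.mem_top
      induction hy using Submodule.span_induction with
      | mem z hz =>
        obtain ⟨j, rfl⟩ := hz
        show P ((f ^ j) w) = 0
        by_cases hj : j < n
        · rw [hPdef, Qop_apply_eig h _ _ _ (hhk j) n]
          rw [Finset.prod_eq_zero (Finset.mem_range.mpr hj) (by ring), zero_smul]
        · rw [hfkz j (by omega), map_zero]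
      | zero => exact map_zero P
      | add a b _ _ ha hb => rw [map_add, ha, hb, add_zero]
      | smul c a _ ha => rw [map_smul, ha, smul_zero]
    have h1 : P x = (∏ k ∈ Finset.range n, (μ - (L - 2 * k))) • x :=
      Qop_apply_eig h _ _ _ hxe n
    rw [hP0 x] at h1
    have h2 : (∏ k ∈ Finset.range n, (μ - (L - 2 * k))) = 0 := by
      by_contra hne
      exact hx0 (by simpa [smul_eq_zero, hne] using h1.symm)
    obtain ⟨k, hk, hk0⟩ := Finset.prod_eq_zero_iff.mp h2
    exact ⟨k, Finset.mem_range.mp hk, by linear_combination hk0⟩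
  have hmem_eig : ∀ k : ℕ, k < n → h.eigenspace (L - 2 * k) ≠ ⊥ := by
    intro k hk hbot
    apply hfknz k hk
    have : (f ^ k) w ∈ h.eigenspace (L - 2 * k) := Module.End.mem_eigenspace_iff.mpr (hhk k)
    rw [hbot, Submodule.mem_bot] at this
    exact this
  refine ⟨?_, ?_, ?_⟩
  · intro v
    refine ⟨⊤, inferInstance, Submodule.mem_top, ?_, ?_, ?_⟩ <;> simp
  · intro μ hμ
    obtain ⟨k, hk, rfl⟩ := hsupp μ hμ
    have hj : n - 1 - k < n := by omega
    have hcast : ((n - 1 - k : ℕ) : ℂ) = (n : ℂ) - 1 - k := by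
      rw [Nat.cast_sub (by omega), Nat.cast_sub hn1, Nat.cast_one]
    have : -(L - 2 * (k : ℂ)) = L - 2 * ((n - 1 - k : ℕ) : ℂ) := by
      rw [hcast, hL]; ring
    rw [this]
    exact hmem_eig _ hj
  · intro μ hμ hμ2
    obtain ⟨k, hk, rfl⟩ := hsupp μ hμ
    rcases Nat.eq_zero_or_pos k with h0 | h0
    · refine ⟨n - 1, ?_⟩
      rw [h0, hL, Nat.cast_sub hn1, Nat.cast_one]
      push_cast
      ring
    · exfalso
      apply hmem_eig (k - 1) (by omega)
      have : L - 2 * (k : ℂ) + 2 = L - 2 * ((k - 1 : ℕ) : ℂ) := by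
        rw [Nat.cast_sub h0, Nat.cast_one]; ring
      rw [← this]
      exact hμ2
end
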